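/- arXiv:2603.00929 — 9 statements merged into one kernel-verified Lean document; each statement's English description precedes it below -/
import Mathlib

section
/- Let H be a real Hilbert space and let S be a dense linear subspace of H. For every N ∈ ℕ, every orthonormal family h₁, …, h_N in H, and every ε > 0, there exist ℓ₁, …, ℓ_N ∈ S which are orthonormal in H and satisfy Σ_{n=1}^{N} ‖h_n − ℓ_n‖ < ε. -/
local notation "⟪" x ", " y "⟫" => @inner ℝ _ _ x y

/-- Let `H` be a real Hilbert space and `S` a dense linear subspace.  For every
`N`, every orthonormal family `h₁, …, h_N` in `H` and every `ε > 0` there exist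
`ℓ₁, …, ℓ_N ∈ S`, orthonormal in `H`, with `∑ₙ ‖hₙ − ℓₙ‖ < ε`. -/
theorem stmt3 {H : Type*} [NormedAddCommGroup H] [InnerProductSpace ℝ H]
    (S : Submodule ℝ H) (hS : Dense (S : Set H))
    (N : ℕ) (h : Fin N → H) (hh : Orthonormal ℝ h) (ε : ℝ) (hε : 0 < ε) :
    ∃ ℓ : Fin N → H, (∀ n, ℓ n ∈ S) ∧ Orthonormal ℝ ℓ ∧ ∑ n, ‖h n - ℓ n‖ < ε := by
  induction N generalizing ε with
  | zero =>
    refine ⟨fun i => i.elim0, fun i => i.elim0, orthonormal_iff_ite.mpr (fun i => i.elim0), ?_⟩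
    simpa using hε
  | succ N ih =>
    set δ : ℝ := min (ε / (2 * N + 6)) (1 / (2 * N + 6)) with hδdef
    have hden : (0:ℝ) < 2 * N + 6 := by positivity
    have hδpos : 0 < δ := lt_min (by positivity) (by positivity)
    have hδ1 : δ ≤ 1 / (2 * N + 6) := min_le_right _ _
    have hδε : δ ≤ ε / (2 * N + 6) := min_le_left _ _
    -- induction hypothesis on the first N vectors
    obtain ⟨ℓ₀, hℓ₀S, hℓ₀on, hℓ₀sum⟩ :=
      ih (h ∘ Fin.castSucc) (hh.comp _ (Fin.castSucc_injective N)) δ hδpos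
    set h' : H := h (Fin.last N) with hh'def
    have hnh' : ‖h'‖ = 1 := hh.1 _
    -- approximate h' in S
    obtain ⟨s, hsS, hsd⟩ : ∃ s ∈ (S : Set H), ‖h' - s‖ < δ := by
      have := Metric.mem_closure_iff.mp (hS h') δ hδpos
      obtain ⟨s, hs1, hs2⟩ := this
      exact ⟨s, hs1, by rwa [dist_eq_norm] at hs2⟩
    -- orthogonalize
    set v : H := s - ∑ i : Fin N, ⟪ℓ₀ i, s⟫ • ℓ₀ i with hvdef
    have hvS : v ∈ S :=
      S.sub_mem hsS (Submodule.sum_mem _ fun i _ => S.smul_mem _ (hℓ₀S i))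
    have hon := orthonormal_iff_ite.mp hℓ₀on
    have hperp : ∀ j, ⟪ℓ₀ j, v⟫ = 0 := by
      intro j
      simp only [hvdef, inner_sub_right, inner_sum, real_inner_smul_right]
      rw [Finset.sum_eq_single j]
      · rw [hon j j]; simp
      · intro i _ hij
        rw [hon j i, if_neg (Ne.symm hij), mul_zero]
      · simp
    -- coefficient bounds
    have hcoef : ∀ i : Fin N, |⟪ℓ₀ i, s⟫| ≤ δ + ‖h (Fin.castSucc i) - ℓ₀ i‖ := by
      intro i
      have hsplit : ⟪ℓ₀ i, s⟫ =
          ⟪ℓ₀ i, s - h'⟫ + ⟪ℓ₀ i - h (Fin.castSucc i), h'⟫ + ⟪h (Fin.castSucc i), h'⟫ := by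
        simp [inner_sub_left, inner_sub_right]
      have hz : ⟪h (Fin.castSucc i), h'⟫ = 0 :=
        hh.2 (Fin.castSucc_lt_last i).ne
      rw [hsplit, hz, add_zero]
      calc |⟪ℓ₀ i, s - h'⟫ + ⟪ℓ₀ i - h (Fin.castSucc i), h'⟫|
          ≤ |⟪ℓ₀ i, s - h'⟫| + |⟪ℓ₀ i - h (Fin.castSucc i), h'⟫| := abs_add_le _ _
        _ ≤ ‖ℓ₀ i‖ * ‖s - h'‖ + ‖ℓ₀ i - h (Fin.castSucc i)‖ * ‖h'‖ :=
            add_le_add (abs_real_inner_le_norm _ _) (abs_real_inner_le_norm _ _)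
        _ ≤ δ + ‖h (Fin.castSucc i) - ℓ₀ i‖ := by
            rw [hℓ₀on.1 i, hnh', one_mul, mul_one, norm_sub_rev s, norm_sub_rev (ℓ₀ i)]
            exact add_le_add hsd.le le_rfl
    -- norm bound on h' - v
    have hsum' : ∑ i : Fin N, ‖h (Fin.castSucc i) - ℓ₀ i‖ < δ := by
      simpa using hℓ₀sum
    have hhv : ‖h' - v‖ ≤ (N + 2) * δ := by
      have h1 : h' - v = (h' - s) + ∑ i : Fin N, ⟪ℓ₀ i, s⟫ • ℓ₀ i := by
        rw [hvdef]; abel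
      calc ‖h' - v‖ ≤ ‖h' - s‖ + ‖∑ i : Fin N, ⟪ℓ₀ i, s⟫ • ℓ₀ i‖ := by
            rw [h1]; exact norm_add_le _ _
        _ ≤ ‖h' - s‖ + ∑ i : Fin N, |⟪ℓ₀ i, s⟫| := by
            refine add_le_add le_rfl ?_
            refine (norm_sum_le _ _).trans (Finset.sum_le_sum fun i _ => ?_)
            rw [norm_smul, hℓ₀on.1 i, mul_one]
            exact le_of_eq (Real.norm_eq_abs _)
        _ ≤ δ + ∑ i : Fin N, (δ + ‖h (Fin.castSucc i) - ℓ₀ i‖) :=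
            add_le_add hsd.le (Finset.sum_le_sum fun i _ => hcoef i)
        _ = δ + N * δ + ∑ i : Fin N, ‖h (Fin.castSucc i) - ℓ₀ i‖ := by
            rw [Finset.sum_add_distrib, Finset.sum_const, Finset.card_univ,
              Fintype.card_fin, nsmul_eq_mul]
            ring
        _ ≤ δ + N * δ + δ := add_le_add le_rfl hsum'.le
        _ = (N + 2) * δ := by ring
    have hNδ : (N + 2) * δ ≤ 1 / 2 := by
      calc (N + 2) * δ ≤ (N + 2) * (1 / (2 * N + 6)) := by
            exact mul_le_mul_of_nonneg_left hδ1 (by positivity)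
        _ ≤ 1 / 2 := by
            rw [mul_one_div, div_le_div_iff₀ hden (by norm_num : (0:ℝ) < 2)]
            nlinarith
    have hvnorm : (1:ℝ) / 2 ≤ ‖v‖ := by
      have := norm_sub_norm_le h' v
      rw [hnh'] at this
      linarith [hhv.trans hNδ, abs_le.mp (abs_norm_sub_norm_le h' v) |>.1]
    have hvne : ‖v‖ ≠ 0 := by positivity
    set ℓN : H := ‖v‖⁻¹ • v with hℓNdef
    have hℓNnorm : ‖ℓN‖ = 1 := by
      rw [hℓNdef, norm_smul, norm_inv, norm_norm, inv_mul_cancel₀ hvne]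
    have hℓNperp : ∀ j, ⟪ℓ₀ j, ℓN⟫ = 0 := by
      intro j; rw [hℓNdef, real_inner_smul_right, hperp, mul_zero]
    have hℓNS : ℓN ∈ S := S.smul_mem _ hvS
    have hh'ℓN : ‖h' - ℓN‖ ≤ 2 * (N + 2) * δ := by
      have h2 : ‖v - ℓN‖ = |‖v‖ - 1| := by
        rw [hℓNdef]
        have : v - ‖v‖⁻¹ • v = (1 - ‖v‖⁻¹) • v := by
          rw [sub_smul, one_smul]
        rw [this, norm_smul, Real.norm_eq_abs,
          ← abs_of_pos (show (0:ℝ) < ‖v‖ by positivity), ← abs_mul]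
        congr 1
        field_simp
        rw [abs_of_pos (show (0:ℝ) < ‖v‖ by positivity)]; ring
      have h3 : |‖v‖ - 1| ≤ (N + 2) * δ := by
        rw [← hnh']
        calc |‖v‖ - ‖h'‖| ≤ ‖v - h'‖ := abs_norm_sub_norm_le _ _
          _ = ‖h' - v‖ := norm_sub_rev _ _
          _ ≤ (N + 2) * δ := hhv
      calc ‖h' - ℓN‖ ≤ ‖h' - v‖ + ‖v - ℓN‖ := norm_sub_le_norm_sub_add_norm_sub _ _ _
        _ ≤ (N + 2) * δ + (N + 2) * δ := add_le_add hhv (h2 ▸ h3)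
        _ = 2 * (N + 2) * δ := by ring
    -- assemble
    refine ⟨Fin.snoc ℓ₀ ℓN, ?_, ?_, ?_⟩
    · intro n
      refine Fin.lastCases ?_ ?_ n
      · simpa using hℓNS
      · intro i; simpa using hℓ₀S i
    · rw [orthonormal_iff_ite]
      intro i j
      refine Fin.lastCases ?_ ?_ i
      · refine Fin.lastCases ?_ ?_ j
        · simp only [Fin.snoc_last, if_pos rfl]
          rw [real_inner_self_eq_norm_sq, hℓNnorm]; norm_num
        · intro j'
          rw [Fin.snoc_last, Fin.snoc_castSucc, real_inner_comm, hℓNperp,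
            if_neg (Fin.castSucc_lt_last j').ne']
      · intro i'
        refine Fin.lastCases ?_ ?_ j
        · rw [Fin.snoc_last, Fin.snoc_castSucc, hℓNperp,
            if_neg (Fin.castSucc_lt_last i').ne]
        · intro j'
          rw [Fin.snoc_castSucc, Fin.snoc_castSucc, hon i' j']
          simp [Fin.castSucc_inj]
    · rw [Fin.sum_univ_castSucc]
      simp only [Fin.snoc_castSucc, Fin.snoc_last]
      have : ∑ i : Fin N, ‖h (Fin.castSucc i) - ℓ₀ i‖ + ‖h' - ℓN‖ <
          δ + 2 * (N + 2) * δ := by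
        have := hh'ℓN
        linarith [hsum']
      refine this.trans ?_
      calc δ + 2 * (N + 2) * δ = (2 * N + 5) * δ := by ring
        _ ≤ (2 * N + 5) * (ε / (2 * N + 6)) :=
            mul_le_mul_of_nonneg_left hδε (by positivity)
        _ = ε * ((2 * N + 5) / (2 * N + 6)) := by ring
        _ < ε * 1 := by
            refine mul_lt_mul_of_pos_left ?_ hε
            rw [div_lt_one hden]; linarith
        _ = ε := mul_one ε
end

section
/- (Putzer's formula.) Let n ≥ 1, let M be an n×n complex matrix, and let λ₁, …, λₙ ∈ ℂ be such that the characteristic polynomial of M equals ∏_{j=1}^{n} (X − λ_j). Let r₁, …, rₙ : ℝ → ℂ be differentiable functions satisfying r₁′ = λ₁ r₁, r_j′ = r_{j−1} + λ_j r_j for 2 ≤ j ≤ n, r₁(0) = 1, and r_j(0) = 0 for 2 ≤ j ≤ n. Set P₁ = Iₙ and P_j = (M − λ_{j−1} Iₙ) ⋯ (M − λ₁ Iₙ) for 2 ≤ j ≤ n. Then exp(t M) = Σ_{j=1}^{n} r_j(t) P_j for every t ∈ ℝ. -/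
open NormedSpace Polynomial Finset

attribute [local instance] Matrix.linftyOpNormedRing Matrix.linftyOpNormedAlgebra

/-- **Putzer's formula.** Let `M` be an `n×n` complex matrix whose characteristic
polynomial is `∏_{j=1}^n (X − λⱼ)`.  Let `r₁, …, rₙ : ℝ → ℂ` solve the triangular linear system
`r₁′ = λ₁ r₁`, `rⱼ′ = r_{j−1} + λⱼ rⱼ` with `r₁(0) = 1`, `rⱼ(0) = 0` (`j ≥ 2`), and set
`P₁ = I`, `P_{j+1} = (M − λⱼ I) Pⱼ`.  Then `exp (t M) = ∑ⱼ rⱼ(t) Pⱼ` for every real `t`.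
(Indices are `0`-based here: `lam j`, `r j`, `P j` for `j = 0, …, n−1` correspond to
`λ_{j+1}`, `r_{j+1}`, `P_{j+1}`.) -/
theorem stmt4 (n : ℕ) (hn : 1 ≤ n) (M : Matrix (Fin n) (Fin n) ℂ) (lam : ℕ → ℂ)
    (hchar : M.charpoly = ∏ j ∈ Finset.range n, (Polynomial.X - Polynomial.C (lam j)))
    (r : ℕ → ℝ → ℂ)
    (hr0 : ∀ t : ℝ, HasDerivAt (r 0) (lam 0 * r 0 t) t)
    (hrj : ∀ j, 1 ≤ j → j < n → ∀ t : ℝ, HasDerivAt (r j) (r (j - 1) t + lam j * r j t) t)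
    (hr00 : r 0 0 = 1) (hrj0 : ∀ j, 1 ≤ j → j < n → r j 0 = 0)
    (P : ℕ → Matrix (Fin n) (Fin n) ℂ)
    (hP0 : P 0 = 1)
    (hPs : ∀ j, j + 1 < n → P (j + 1) = (M - lam j • (1 : Matrix (Fin n) (Fin n) ℂ)) * P j) :
    ∀ t : ℝ, NormedSpace.exp ((t : ℂ) • M) = ∑ j ∈ Finset.range n, r j t • P j := by
  obtain ⟨m, rfl⟩ : ∃ m, n = m + 1 := ⟨n - 1, (Nat.succ_pred_eq_of_pos hn).symm⟩
  set Φ : ℝ → Matrix (Fin (m + 1)) (Fin (m + 1)) ℂ :=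
    fun t => ∑ j ∈ Finset.range (m + 1), r j t • P j with hΦdef
  -- P j as an evaluated polynomial
  have hPa : ∀ j, j ≤ m → P j = (Polynomial.aeval M) (∏ i ∈ range j, (X - C (lam i))) := by
    intro j
    induction j with
    | zero => intro _; simp [hP0]
    | succ k ih =>
      intro hk
      rw [hPs k (by omega), ih (by omega), Finset.prod_range_succ_comm, map_mul, map_sub,
        aeval_X, aeval_C, Algebra.algebraMap_eq_smul_one]
  -- Cayley–Hamilton
  have htop : (M - lam m • 1) * P m = 0 := by
    have h1 : (M - lam m • 1) * P m
        = (Polynomial.aeval M) (∏ i ∈ range (m + 1), (X - C (lam i))) := by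
      rw [hPa m le_rfl, Finset.prod_range_succ_comm, map_mul, map_sub, aeval_X, aeval_C,
        Algebra.algebraMap_eq_smul_one]
    rw [h1, ← hchar, Matrix.aeval_self_charpoly]
  have hMPm : M * P m = lam m • P m := by
    have := htop
    rw [sub_mul, smul_mul_assoc, one_mul, sub_eq_zero] at this
    exact this
  have hMPj : ∀ j, j < m → M * P j = P (j + 1) + lam j • P j := by
    intro j hj
    rw [hPs j (by omega), sub_mul, smul_mul_assoc, one_mul, sub_add_cancel]
  -- derivative of Φ
  have hΦd : ∀ t : ℝ, HasDerivAt Φ (M * Φ t) t := by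
    intro t
    have h1 : HasDerivAt Φ
        (∑ j ∈ Finset.range (m + 1),
          (if j = 0 then lam 0 * r 0 t else r (j - 1) t + lam j * r j t) • P j) t := by
      apply HasDerivAt.fun_sum
      intro j hj
      rcases Nat.eq_zero_or_pos j with hj0 | hj0
      · subst hj0
        simpa using (hr0 t).smul_const (P 0)
      · rw [if_neg (by omega)]
        exact (hrj j hj0 (mem_range.mp hj) t).smul_const (P j)
    have key : (∑ j ∈ Finset.range (m + 1),
          (if j = 0 then lam 0 * r 0 t else r (j - 1) t + lam j * r j t) • P j)
        = M * Φ t := by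
      have e1 : (∑ j ∈ Finset.range (m + 1),
            (if j = 0 then lam 0 * r 0 t else r (j - 1) t + lam j * r j t) • P j)
          = (∑ j ∈ range m, r j t • P (j + 1))
              + ∑ j ∈ range (m + 1), (lam j * r j t) • P j := by
        rw [Finset.sum_range_succ' (fun j =>
          (if j = 0 then lam 0 * r 0 t else r (j - 1) t + lam j * r j t) • P j) m,
          Finset.sum_range_succ' (fun j => (lam j * r j t) • P j) m]
        simp only [if_neg (Nat.succ_ne_zero _), if_pos rfl, Nat.add_sub_cancel, add_smul]
        rw [Finset.sum_add_distrib]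
        abel
      have e2 : M * Φ t
          = (∑ j ∈ range m, r j t • P (j + 1))
              + ∑ j ∈ range (m + 1), (lam j * r j t) • P j := by
        have hsum : (∑ j ∈ range m, r j t • (M * P j))
            = ∑ j ∈ range m, (r j t • P (j + 1) + (lam j * r j t) • P j) := by
          refine Finset.sum_congr rfl fun j hj => ?_
          rw [hMPj j (mem_range.mp hj), smul_add, smul_smul, mul_comm]
        show (M * ∑ j ∈ Finset.range (m + 1), r j t • P j) = _
        rw [Finset.mul_sum]
        simp_rw [mul_smul_comm]
        rw [Finset.sum_range_succ (fun j => r j t • (M * P j)) m, hsum, hMPm,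
          Finset.sum_range_succ (fun j => (lam j * r j t) • P j) m,
          Finset.sum_add_distrib, smul_smul, mul_comm (r m t) (lam m)]
        abel
      rw [e1, e2]
    rwa [key] at h1
  -- derivative of t ↦ exp(-(t:ℂ) • M)
  have hexp : ∀ t : ℝ, HasDerivAt (fun s : ℝ => exp ((-(s : ℂ)) • M))
      (-(exp ((-(t : ℂ)) • M) * M)) t := by
    intro t
    have h1 : HasDerivAt (fun u : ℂ => exp (u • M))
        (exp ((-(t : ℂ)) • M) * M) (-(t : ℂ)) := hasDerivAt_exp_smul_const M _
    have h2 : HasDerivAt (fun s : ℝ => (-(s : ℂ))) (-1 : ℂ) t := by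
      exact (Complex.ofRealCLM.hasDerivAt (x := t)).neg
    have h3 := h1.scomp t h2
    exact h3.congr_deriv (neg_one_smul ℂ _)
  -- t ↦ exp(-(t:ℂ) • M) * Φ t is constant
  have hΨ : ∀ t : ℝ, HasDerivAt (fun s : ℝ => exp ((-(s : ℂ)) • M) * Φ s) 0 t := by
    intro t
    have h := (hexp t).mul (hΦd t)
    have h0 : (-(exp ((-(t : ℂ)) • M) * M)) * Φ t
        + exp ((-(t : ℂ)) • M) * (M * Φ t) = 0 := by
      rw [neg_mul, mul_assoc, neg_add_cancel]
    rwa [h0] at h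
  have hconst : ∀ t : ℝ, exp ((-((t : ℝ) : ℂ)) • M) * Φ t
      = exp ((-(((0 : ℝ) : ℂ))) • M) * Φ 0 := fun t =>
    is_const_of_deriv_eq_zero (fun s => (hΨ s).differentiableAt) (fun s => (hΨ s).deriv) t 0
  have hΦ0 : Φ 0 = 1 := by
    show (∑ j ∈ Finset.range (m + 1), r j 0 • P j) = 1
    rw [Finset.sum_eq_single 0]
    · rw [hr00, hP0, one_smul]
    · intro j hj hj0
      rw [hrj0 j (by omega) (mem_range.mp hj), zero_smul]
    · intro h
      exact absurd (mem_range.mpr (by omega)) h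
  have hmain : ∀ t : ℝ, exp ((-(t : ℂ)) • M) * Φ t = 1 := by
    intro t
    rw [hconst t, hΦ0, mul_one]
    have h00 : (-(((0 : ℝ) : ℂ))) • M = 0 := by simp
    rw [h00, exp_zero]
  intro t
  have hcomm : Commute ((t : ℂ) • M) ((-(t : ℂ)) • M) :=
    ((Commute.refl M).smul_left _).smul_right _
  have hE : exp ((t : ℂ) • M) * exp ((-(t : ℂ)) • M) = 1 := by
    erw [← exp_add_of_commute hcomm]
    simp [exp_zero]
  calc exp ((t : ℂ) • M)
      = exp ((t : ℂ) • M) * (exp ((-(t : ℂ)) • M) * Φ t) := by rw [hmain, mul_one]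
    _ = (exp ((t : ℂ) • M) * exp ((-(t : ℂ)) • M)) * Φ t := (mul_assoc _ _ _).symm
    _ = Φ t := by rw [hE, one_mul]
end

section
/- Let M be an n×n complex matrix whose characteristic polynomial factors as ∏_{j=1}^{m} (X − ν_j)^{m_j}, where ν₁, …, ν_m ∈ ℂ are pairwise distinct and m₁ + ⋯ + m_m = n. Then there exist complex n×n matrices C_{j,i} for 1 ≤ j ≤ m and 1 ≤ i ≤ m_j such that exp(t M) = Σ_{j=1}^{m} Σ_{i=1}^{m_j} t^{i−1} e^{ν_j t} C_{j,i} for every t ∈ ℝ. -/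
open Polynomial NormedSpace

lemma aux_exp_trunc {A : Type*} [NormedRing A] [NormedAlgebra ℂ A] [CompleteSpace A]
    (N E : A) (m : ℕ) (h : N ^ m * E = 0) :
    exp N * E = ∑ k ∈ Finset.range m, ((Nat.factorial k : ℂ))⁻¹ • (N ^ k * E) := by
  have hs : Summable fun k : ℕ => ((Nat.factorial k : ℂ))⁻¹ • N ^ k := expSeries_summable' (𝕂 := ℂ) N
  have h0 : ∀ k ∉ Finset.range m, (((Nat.factorial k : ℂ))⁻¹ • N ^ k) * E = 0 := by
    intro k hk
    rw [Finset.mem_range, not_lt] at hk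
    have hpow : N ^ k = N ^ (k - m) * N ^ m := by rw [← pow_add]; congr 1; omega
    rw [smul_mul_assoc, hpow, mul_assoc, h, mul_zero, smul_zero]
  calc exp N * E = (∑' k : ℕ, ((Nat.factorial k : ℂ))⁻¹ • N ^ k) * E := by rw [exp_eq_tsum ℂ]
    _ = ∑' k : ℕ, (((Nat.factorial k : ℂ))⁻¹ • N ^ k) * E := (hs.tsum_mul_right E).symm
    _ = ∑ k ∈ Finset.range m, (((Nat.factorial k : ℂ))⁻¹ • N ^ k) * E := tsum_eq_sum h0
    _ = ∑ k ∈ Finset.range m, ((Nat.factorial k : ℂ))⁻¹ • (N ^ k * E) := by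
        simp [smul_mul_assoc]

lemma aux_exp_smul_one {A : Type*} [NormedRing A] [NormedAlgebra ℂ A] [CompleteSpace A]
    (c : ℂ) : exp (c • (1 : A)) = Complex.exp c • 1 := by
  rw [Complex.exp_eq_exp_ℂ, ← Algebra.algebraMap_eq_smul_one,
    ← algebraMap_exp_comm, Algebra.algebraMap_eq_smul_one]

/-- Let `M` be an `n×n` complex matrix whose characteristic polynomial factors
as `∏_{j=1}^m (X − νⱼ)^{mⱼ}` with pairwise distinct `ν₁, …, ν_m` and `m₁ + ⋯ + m_m = n`.  Then
there are complex `n×n` matrices `C_{j,i}` (`1 ≤ j ≤ m`, `1 ≤ i ≤ mⱼ`) with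
`exp (t M) = ∑ⱼ ∑ᵢ t^{i−1} e^{νⱼ t} C_{j,i}` for every real `t`.
(Here `i : Fin (mult j)` is `0`-based, so `t ^ (i : ℕ)` corresponds to `t^{i−1}`.) -/
theorem stmt5 (n m : ℕ) (M : Matrix (Fin n) (Fin n) ℂ)
    (ν : Fin m → ℂ) (hν : Function.Injective ν)
    (mult : Fin m → ℕ) (hsum : ∑ j, mult j = n)
    (hchar : M.charpoly = ∏ j, (Polynomial.X - Polynomial.C (ν j)) ^ mult j) :
    ∃ C : (j : Fin m) → Fin (mult j) → Matrix (Fin n) (Fin n) ℂ,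
      ∀ t : ℝ, NormedSpace.exp ((t : ℂ) • M) =
        ∑ j, ∑ i : Fin (mult j), ((t : ℂ) ^ (i : ℕ) * Complex.exp (ν j * t)) • C j i := by
  letI : NormedRing (Matrix (Fin n) (Fin n) ℂ) := Matrix.linftyOpNormedRing
  letI : NormedAlgebra ℂ (Matrix (Fin n) (Fin n) ℂ) := Matrix.linftyOpNormedAlgebra
  rcases Nat.eq_zero_or_pos m with hm | hm
  · subst hm
    have hn : n = 0 := by simpa using hsum.symm
    subst hn
    exact ⟨fun j i => 0, fun t => Subsingleton.elim _ _⟩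
  haveI : Nonempty (Fin m) := ⟨⟨0, hm⟩⟩
  -- coprime family
  have hpair : Pairwise (Function.onFun IsCoprime fun j : Fin m => (X - C (ν j)) ^ mult j) := by
    intro i j hij
    exact ((pairwise_coprime_X_sub_C hν) hij).pow
  obtain ⟨μ, hμ⟩ := (exists_sum_eq_one_iff_pairwise_coprime'
    (s := fun j : Fin m => (X - C (ν j)) ^ mult j)).mpr hpair
  -- the projections
  set E : Fin m → Matrix (Fin n) (Fin n) ℂ :=
    fun j => Polynomial.aeval M (μ j * ∏ k ∈ ({j}ᶜ : Finset (Fin m)), (X - C (ν k)) ^ mult k)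
    with hE
  have hEsum : ∑ j, E j = 1 := by
    rw [hE, ← map_sum, hμ, map_one]
  set N : Fin m → Matrix (Fin n) (Fin n) ℂ := fun j => M - ν j • 1 with hN
  have hNE : ∀ j, N j ^ mult j * E j = 0 := by
    intro j
    have h1 : N j ^ mult j = Polynomial.aeval M ((X - C (ν j)) ^ mult j) := by
      simp [hN, Algebra.algebraMap_eq_smul_one]
    rw [h1, hE, ← map_mul]
    have h2 : (X - C (ν j)) ^ mult j * (μ j * ∏ k ∈ ({j}ᶜ : Finset (Fin m)), (X - C (ν k)) ^ mult k)
        = μ j * M.charpoly := by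
      rw [hchar, Finset.prod_eq_prod_diff_singleton_mul (Finset.mem_univ j)
        (fun k => (X - C (ν k)) ^ mult k), ← Finset.compl_eq_univ_sdiff]
      ring
    rw [h2, map_mul, Matrix.aeval_self_charpoly, mul_zero]
  refine ⟨fun j i => ((Nat.factorial (i : ℕ) : ℂ))⁻¹ • (N j ^ (i : ℕ) * E j), fun t => ?_⟩
  have key : ∀ j, exp ((t : ℂ) • M) * E j
      = ∑ i : Fin (mult j), ((t : ℂ) ^ (i : ℕ) * Complex.exp (ν j * t)) •
          (((Nat.factorial (i : ℕ) : ℂ))⁻¹ • (N j ^ (i : ℕ) * E j)) := by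
    intro j
    have hsplit : (t : ℂ) • M = ((t : ℂ) * ν j) • (1 : Matrix (Fin n) (Fin n) ℂ)
        + (t : ℂ) • N j := by
      rw [hN, smul_sub, smul_smul]
      abel
    have hcomm : Commute (((t : ℂ) * ν j) • (1 : Matrix (Fin n) (Fin n) ℂ)) ((t : ℂ) • N j) :=
      ((Commute.one_left (N j)).smul_left _).smul_right _
    have hNE' : ((t : ℂ) • N j) ^ mult j * E j = 0 := by
      rw [_root_.smul_pow, smul_mul_assoc, hNE j, smul_zero]
    rw [hsplit, Matrix.exp_add_of_commute _ _ hcomm]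
    erw [aux_exp_smul_one]
    rw [smul_mul_assoc, smul_mul_assoc, one_mul]
    erw [aux_exp_trunc _ _ _ hNE']
    rw [Finset.smul_sum, Fin.sum_univ_eq_sum_range
        (fun i => ((t : ℂ) ^ i * Complex.exp (ν j * t)) • (((Nat.factorial i : ℂ))⁻¹ • (N j ^ i * E j)))]
    refine Finset.sum_congr rfl fun k hk => ?_
    rw [_root_.smul_pow, smul_mul_assoc, smul_smul, smul_smul, smul_smul]
    congr 1
    rw [mul_comm (ν j) (t : ℂ)]
    ring
  calc exp ((t : ℂ) • M) = exp ((t : ℂ) • M) * ∑ j, E j := by rw [hEsum, mul_one]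
    _ = ∑ j, exp ((t : ℂ) • M) * E j := by rw [Finset.mul_sum]
    _ = _ := Finset.sum_congr rfl fun j _ => key j
end

section
/- Let k, d ≥ 1, let C₀, …, C_{k−1}, U₀, …, U_{k−1} ∈ ℝ^{d×d}, and let U : ℝ → ℝ^{d×d} be a k-times continuously differentiable function satisfying U^{(k)}(t) = C_{k−1} U^{(k−1)}(t) + ⋯ + C₁ U^{(1)}(t) + C₀ U(t) for all t ∈ ℝ and U^{(i)}(0) = U_i for 0 ≤ i ≤ k−1. Let M ∈ ℝ^{kd×kd} be the block companion matrix whose (i, i+1)-block equals I_d for 1 ≤ i ≤ k−1, whose bottom block row is (C₀, C₁, …, C_{k−1}), and whose remaining blocks are zero; let λ₁, …, λ_{kd} ∈ ℂ be such that the characteristic polynomial of M equals ∏_{j=1}^{kd} (X − λ_j). Let r₁, …, r_{kd} : ℝ → ℂ be infinitely differentiable functions satisfying r₁′ = λ₁ r₁, r_j′ = r_{j−1} + λ_j r_j for 2 ≤ j ≤ kd, r₁(0) = 1, and r_j(0) = 0 for j ≥ 2. Define Q₁, …, Q_{kd} ∈ ℂ^{d×d} successively by Q₁ = U₀; Q_{m+1}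 = U_m − Σ_{j=1}^{m} r_j^{(m)}(0) Q_j for 1 ≤ m ≤ k−1; and Q_{k+n+1} = Σ_{i=0}^{k−1} C_i (Σ_{j=1}^{i+n+1} r_j^{(i+n)}(0) Q_j) − Σ_{j=1}^{k+n} r_j^{(k+n)}(0) Q_j for 0 ≤ n ≤ k(d−1)−1. Then U(t) = Σ_{j=1}^{kd} r_j(t) Q_j for every t ∈ ℝ (real matrices being regarded as complex matrices). -/
attribute [local instance] Matrix.frobeniusSeminormedAddCommGroup
  Matrix.frobeniusNormedAddCommGroup Matrix.frobeniusNormedSpace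

open Finset Polynomial Matrix

namespace Stmt6Aux

lemma itd_itd {f : ℝ → ℂ} (a m : ℕ) :
    iteratedDeriv m (iteratedDeriv a f) = iteratedDeriv (a + m) f := by
  induction m with
  | zero => simp
  | succ m ih =>
    rw [iteratedDeriv_succ, ih, show a + (m + 1) = (a + m) + 1 from rfl, iteratedDeriv_succ]

variable {ι : Type*} [Fintype ι] [DecidableEq ι]

lemma hasDerivAt_mulVec (A B : Matrix ι ι ℂ) (y : ℝ → ι → ℂ)
    (hy : ∀ v t, HasDerivAt (fun s => y s v) ((A.mulVec (y t)) v) t) (v : ι) (t : ℝ) :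
    HasDerivAt (fun s => (B.mulVec (y s)) v) (((B * A).mulVec (y t)) v) t := by
  have h1 : HasDerivAt (fun s => ∑ w, B v w * y s w) (∑ w, B v w * (A.mulVec (y t)) w) t :=
    HasDerivAt.fun_sum fun w _ => (hy w t).const_mul _
  have h2 : (fun s => (B.mulVec (y s)) v) = fun s => ∑ w, B v w * y s w := by
    funext s; simp [Matrix.mulVec, dotProduct]
  rw [h2, show ((B * A).mulVec (y t)) v = ∑ w, B v w * (A.mulVec (y t)) w by
    rw [← Matrix.mulVec_mulVec]; simp [Matrix.mulVec, dotProduct]]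
  exact h1

lemma itd_mulVec (A : Matrix ι ι ℂ) (y : ℝ → ι → ℂ)
    (hy : ∀ v t, HasDerivAt (fun s => y s v) ((A.mulVec (y t)) v) t) (m : ℕ) (v : ι) (t : ℝ) :
    iteratedDeriv m (fun s => y s v) t = ((A ^ m).mulVec (y t)) v := by
  induction m generalizing t with
  | zero => simp [Matrix.one_mulVec]
  | succ m ih =>
    have hfun : iteratedDeriv m (fun s => y s v) = fun s => ((A ^ m).mulVec (y s)) v :=
      funext fun s => ih s
    rw [iteratedDeriv_succ, hfun, (hasDerivAt_mulVec A (A ^ m) y hy v t).deriv, ← pow_succ]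

/-- companion matrix of the monic polynomial with lower coefficients `c`. -/
def comp (N : ℕ) (c : ℕ → ℂ) : Matrix (Fin N) (Fin N) ℂ :=
  Matrix.of fun m j => if (m : ℕ) = N - 1 then -(c j) else if (j : ℕ) = (m : ℕ) + 1 then 1 else 0

lemma comp_system {N : ℕ} (c : ℕ → ℂ) (B : Matrix ι ι ℂ)
    (hB : B ^ N = ∑ j ∈ Finset.range N, (-(c j)) • B ^ j)
    (y : ℝ → ι → ℂ) (hy : ∀ v t, HasDerivAt (fun s => y s v) ((B.mulVec (y t)) v) t)
    (w : ι → ℂ) (t : ℝ) (m : Fin N) :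
    HasDerivAt (fun s => ∑ v, w v * ((B ^ (m : ℕ)).mulVec (y s)) v)
      (((comp N c).mulVec (fun m' : Fin N => ∑ v, w v * ((B ^ (m' : ℕ)).mulVec (y t)) v)) m)
      t := by
  have hd : HasDerivAt (fun s => ∑ v, w v * ((B ^ (m : ℕ)).mulVec (y s)) v)
      (∑ v, w v * ((B ^ (m : ℕ) * B).mulVec (y t)) v) t :=
    HasDerivAt.fun_sum fun v _ => (hasDerivAt_mulVec B (B ^ (m : ℕ)) y hy v t).const_mul _
  convert hd using 1
  by_cases hm : (m : ℕ) = N - 1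
  · have hpow : B ^ (m : ℕ) * B = B ^ N := by
      rw [← pow_succ]; congr 1; omega
    have hv : ((comp N c).mulVec
        (fun m' : Fin N => ∑ v, w v * ((B ^ (m' : ℕ)).mulVec (y t)) v)) m
        = ∑ j : Fin N, -(c (j : ℕ)) * ∑ v, w v * ((B ^ (j : ℕ)).mulVec (y t)) v := by
      simp [Matrix.mulVec, dotProduct, comp, hm]
    rw [hv, hpow, hB]
    symm
    have hx : ∀ v : ι, ((∑ j ∈ Finset.range N, (-(c j)) • B ^ j).mulVec (y t)) v
        = ∑ j ∈ Finset.range N, -(c j) * ((B ^ j).mulVec (y t)) v := by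
      intro v
      simp [Matrix.mulVec, dotProduct, Matrix.sum_apply, Finset.sum_mul, Finset.mul_sum]
      rw [Finset.sum_comm]
      simp [mul_assoc]
    calc ∑ v, w v * ((∑ j ∈ Finset.range N, (-(c j)) • B ^ j).mulVec (y t)) v
        = ∑ v, ∑ j ∈ Finset.range N, w v * (-(c j) * ((B ^ j).mulVec (y t)) v) := by
          refine Finset.sum_congr rfl fun v _ => ?_
          rw [hx v, Finset.mul_sum]
      _ = ∑ j ∈ Finset.range N, ∑ v, w v * (-(c j) * ((B ^ j).mulVec (y t)) v) :=
          Finset.sum_comm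
      _ = ∑ j ∈ Finset.range N, -(c j) * ∑ v, w v * ((B ^ j).mulVec (y t)) v := by
          refine Finset.sum_congr rfl fun j _ => ?_
          rw [Finset.mul_sum]; refine Finset.sum_congr rfl fun v _ => by ring
      _ = ∑ j : Fin N, -(c (j : ℕ)) * ∑ v, w v * ((B ^ (j : ℕ)).mulVec (y t)) v :=
          (Fin.sum_univ_eq_sum_range _ _).symm
  · have hlt : (m : ℕ) + 1 < N := by have := m.isLt; omega
    have hv : ((comp N c).mulVec
        (fun m' : Fin N => ∑ v, w v * ((B ^ (m' : ℕ)).mulVec (y t)) v)) m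
        = ∑ v, w v * ((B ^ ((m : ℕ) + 1)).mulVec (y t)) v := by
      have : ∀ j : Fin N, (comp N c) m j = if j = (⟨(m : ℕ) + 1, hlt⟩ : Fin N) then 1 else 0 := by
        intro j
        simp only [comp, Matrix.of_apply, hm, if_false, Fin.ext_iff]
      simp only [Matrix.mulVec, dotProduct]
      rw [Finset.sum_congr rfl fun j _ => by rw [this j]]
      simp [Finset.sum_ite_eq']
    rw [hv, ← pow_succ]

lemma linear_ODE_unique {N : ℕ} (A : Matrix (Fin N) (Fin N) ℂ) (f g : ℝ → Fin N → ℂ)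
    (hf : ∀ t, HasDerivAt f (A.mulVec (f t)) t)
    (hg : ∀ t, HasDerivAt g (A.mulVec (g t)) t)
    (h0 : f 0 = g 0) (t : ℝ) : f t = g t := by
  set φ := LinearMap.toContinuousLinearMap (Matrix.mulVecLin A) with hφdef
  have hφ : ∀ x, A.mulVec x = φ x := fun x => by simp [hφdef]
  have hlip : ∀ s : ℝ, LipschitzOnWith ‖φ‖₊ (fun x => A.mulVec x) Set.univ := by
    intro s
    have := φ.lipschitz
    refine LipschitzWith.lipschitzOnWith ?_
    simpa [funext hφ] using this
  have hmem : t ∈ Set.Icc (-(|t| + 1)) (|t| + 1) :=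
    ⟨by have := neg_abs_le t; linarith, by have := le_abs_self t; linarith⟩
  have h0mem : (0 : ℝ) ∈ Set.Ioo (-(|t| + 1)) (|t| + 1) := by
    constructor <;> [nlinarith [abs_nonneg t]; nlinarith [abs_nonneg t]]
  have hcf : ContinuousOn f (Set.Icc (-(|t| + 1)) (|t| + 1)) :=
    (continuous_iff_continuousAt.2 fun s => (hf s).continuousAt).continuousOn
  have hcg : ContinuousOn g (Set.Icc (-(|t| + 1)) (|t| + 1)) :=
    (continuous_iff_continuousAt.2 fun s => (hg s).continuousAt).continuousOn
  exact ODE_solution_unique_of_mem_Icc (v := fun _ x => A.mulVec x) (s := fun _ => Set.univ)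
    (fun s _ => hlip s) h0mem hcf (fun s _ => hf s) (fun _ _ => trivial) hcg
    (fun s _ => hg s) (fun _ _ => trivial) h0 hmem

lemma CH_pow {N : ℕ} (B : Matrix ι ι ℂ) (p : Polynomial ℂ) (hp : Polynomial.aeval B p = 0)
    (hmonic : p.Monic) (hdeg : p.natDegree = N) :
    B ^ N = ∑ j ∈ Finset.range N, (-(p.coeff j)) • B ^ j := by
  have h := Polynomial.aeval_eq_sum_range (R := ℂ) (p := p) B
  rw [hp, hdeg, Finset.sum_range_succ] at h
  have hc : p.coeff N = 1 := by
    have := hmonic.coeff_natDegree; rwa [hdeg] at this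
  rw [hc, one_smul] at h
  have : B ^ N = -∑ i ∈ Finset.range N, p.coeff i • B ^ i := by
    have := eq_neg_of_add_eq_zero_right h.symm; linear_combination (norm := module) this
  rw [this, ← Finset.sum_neg_distrib]
  exact Finset.sum_congr rfl fun j _ => by rw [neg_smul]

end Stmt6Aux

/-- Explicit solution of the matrix-valued constant-coefficient linear ODE
`U^{(k)} = C_{k−1} U^{(k−1)} + ⋯ + C₀ U`, `U^{(i)}(0) = Uᵢ`, via Putzer-type functions `r_j`
attached to the eigenvalues of the block companion matrix `M` and recursively defined matrices
`Q_j`:  `U(t) = ∑_{j} r_j(t) Q_j`.  (All indices are `0`-based; `Q m` for `m = 0, …, kd−1`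
corresponds to the paper's `Q_{m+1}`.) -/
theorem stmt6 (k d : ℕ) (hk : 1 ≤ k) (hd : 1 ≤ d)
    (C U0 : ℕ → Matrix (Fin d) (Fin d) ℝ)
    (U : ℝ → Matrix (Fin d) (Fin d) ℝ)
    (hU : ContDiff ℝ k U)
    (hode : ∀ t : ℝ, iteratedDeriv k U t = ∑ i ∈ Finset.range k, C i * iteratedDeriv i U t)
    (hinit : ∀ i < k, iteratedDeriv i U 0 = U0 i)
    (M : Matrix (Fin k × Fin d) (Fin k × Fin d) ℝ)
    (hM : ∀ (a b : Fin k) (i j : Fin d), M (a, i) (b, j) =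
      if (a : ℕ) = k - 1 then C (b : ℕ) i j
      else if (b : ℕ) = (a : ℕ) + 1 ∧ i = j then 1 else 0)
    (lam : ℕ → ℂ)
    (hchar : (M.map (Complex.ofReal ·)).charpoly
      = ∏ j ∈ Finset.range (k * d), (Polynomial.X - Polynomial.C (lam j)))
    (r : ℕ → ℝ → ℂ)
    (hsmooth : ∀ j < k * d, ContDiff ℝ (⊤ : ℕ∞) (r j))
    (hr0 : ∀ t : ℝ, deriv (r 0) t = lam 0 * r 0 t)
    (hrj : ∀ j, 1 ≤ j → j < k * d → ∀ t : ℝ, deriv (r j) t = r (j - 1) t + lam j * r j t)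
    (hr00 : r 0 0 = 1) (hrj0 : ∀ j, 1 ≤ j → j < k * d → r j 0 = 0)
    (Q : ℕ → Matrix (Fin d) (Fin d) ℂ)
    (hQ0 : Q 0 = (U0 0).map (Complex.ofReal ·))
    (hQ1 : ∀ m, 1 ≤ m → m < k → Q m
      = (U0 m).map (Complex.ofReal ·) - ∑ j ∈ Finset.range m, iteratedDeriv m (r j) 0 • Q j)
    (hQ2 : ∀ nn < k * (d - 1), Q (k + nn)
      = (∑ i ∈ Finset.range k, ((C i).map (Complex.ofReal ·)) *
            ∑ j ∈ Finset.range (i + nn + 1), iteratedDeriv (i + nn) (r j) 0 • Q j)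
        - ∑ j ∈ Finset.range (k + nn), iteratedDeriv (k + nn) (r j) 0 • Q j) :
    ∀ t : ℝ, (U t).map (Complex.ofReal ·) = ∑ j ∈ Finset.range (k * d), r j t • Q j := by
  intro t
  ext i c
  simp only [Matrix.map_apply, Matrix.sum_apply, Matrix.smul_apply, smul_eq_mul]
  set N := k * d with hNdef
  have h0N : 0 < N := Nat.mul_pos hk hd
  have hkm1 : k - 1 < k := by omega
  -- scalar entry functions
  set g : Fin d → ℝ → ℂ := fun i' s => ((U s i' c : ℝ) : ℂ) with hgdef
  have ecl : ∀ i' : Fin d, ∃ φ : Matrix (Fin d) (Fin d) ℝ →L[ℝ] ℂ,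
      ∀ A : Matrix (Fin d) (Fin d) ℝ, φ A = ((A i' c : ℝ) : ℂ) := by
    intro i'
    let e1 : Matrix (Fin d) (Fin d) ℝ →ₗ[ℝ] ℝ :=
      { toFun := fun A => A i' c, map_add' := fun _ _ => rfl, map_smul' := fun _ _ => rfl }
    exact ⟨Complex.ofRealCLM.comp (LinearMap.toContinuousLinearMap e1), fun A => rfl⟩
  have hentry : ∀ n, n ≤ k → ∀ (i' : Fin d) (s : ℝ),
      iteratedDeriv n (g i') s = (((iteratedDeriv n U s) i' c : ℝ) : ℂ) := by
    intro n hn i' s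
    obtain ⟨φ, hφ⟩ := ecl i'
    have hgi : g i' = φ ∘ U := funext fun s => (hφ (U s)).symm
    rw [hgi, iteratedDeriv_eq_iteratedFDeriv]
    erw [φ.iteratedFDeriv_comp_left (hU.contDiffAt (x := s)) (by exact_mod_cast hn)]
    exact (hφ (iteratedDeriv n U s)) ▸ rfl
  have hgsmooth : ∀ i' : Fin d, ContDiff ℝ k (g i') := by
    intro i'; obtain ⟨φ, hφ⟩ := ecl i'
    have hgi : g i' = φ ∘ U := funext fun s => (hφ (U s)).symm
    rw [hgi]; exact φ.contDiff.comp hU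
  -- complexified companion matrix
  set Mc : Matrix (Fin k × Fin d) (Fin k × Fin d) ℂ := M.map (Complex.ofReal ·) with hMcdef
  have hMrow : ∀ (x : Fin k × Fin d → ℂ) (i' : Fin d),
      (Mc.mulVec x) (⟨k - 1, hkm1⟩, i')
        = ∑ b : Fin k, ∑ j : Fin d, ((C (b : ℕ) i' j : ℝ) : ℂ) * x (b, j) := by
    intro x i'
    simp only [Matrix.mulVec, dotProduct, Fintype.sum_prod_type, hMcdef,
      Matrix.map_apply]
    refine Finset.sum_congr rfl fun b _ => Finset.sum_congr rfl fun j _ => ?_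
    rw [hM]
    rw [if_pos (rfl : ((⟨k - 1, hkm1⟩ : Fin k) : ℕ) = k - 1)]
  have hMshift : ∀ (x : Fin k × Fin d → ℂ) (a : Fin k) (i' : Fin d),
      (a : ℕ) ≠ k - 1 → ∀ (hlt : (a : ℕ) + 1 < k),
      (Mc.mulVec x) (a, i') = x (⟨(a : ℕ) + 1, hlt⟩, i') := by
    intro x a i' ha hlt
    simp only [Matrix.mulVec, dotProduct, Fintype.sum_prod_type, hMcdef,
      Matrix.map_apply]
    have hterm : ∀ (b : Fin k) (j : Fin d),
        ((M (a, i') (b, j) : ℝ) : ℂ) * x (b, j)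
          = if j = i' then (if b = (⟨(a : ℕ) + 1, hlt⟩ : Fin k) then x (b, j) else 0)
            else 0 := by
      intro b j
      rw [hM, if_neg ha]
      by_cases h1 : b = (⟨(a : ℕ) + 1, hlt⟩ : Fin k)
      · by_cases h2 : j = i'
        · rw [if_pos (⟨by rw [h1], h2.symm⟩ : (b : ℕ) = (a : ℕ) + 1 ∧ i' = j)]
          simp [h1, h2]
        · rw [if_neg (fun hc => h2 hc.2.symm)]; simp [h2]
      · rw [if_neg (fun hc => h1 (Fin.ext (by rw [hc.1])))]
        simp [h1]
    rw [Finset.sum_congr rfl fun b (_ : b ∈ Finset.univ) =>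
      Finset.sum_congr rfl fun j (_ : j ∈ Finset.univ) => hterm b j]
    simp
  -- the first-order system satisfied by the derivatives of the entries of U
  set Y : ℝ → (Fin k × Fin d) → ℂ := fun s v => iteratedDeriv (v.1 : ℕ) (g v.2) s with hYdef
  have hYd : ∀ (v : Fin k × Fin d) (t' : ℝ),
      HasDerivAt (fun s => Y s v) ((Mc.mulVec (Y t')) v) t' := by
    rintro ⟨a, i'⟩ t'
    have hdiff : HasDerivAt (fun s => Y s (a, i'))
        (iteratedDeriv ((a : ℕ) + 1) (g i') t') t' := by
      have h1 : DifferentiableAt ℝ (iteratedDeriv (a : ℕ) (g i')) t' :=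
        ((hgsmooth i').differentiable_iteratedDeriv _ (by exact_mod_cast a.isLt)).differentiableAt
      have h2 := h1.hasDerivAt
      rw [← iteratedDeriv_succ] at h2
      exact h2
    by_cases ha : (a : ℕ) = k - 1
    · have haa : a = ⟨k - 1, hkm1⟩ := Fin.ext ha
      have hval : (Mc.mulVec (Y t')) (a, i') = iteratedDeriv ((a : ℕ) + 1) (g i') t' := by
        rw [haa, hMrow]
        rw [show ((⟨k - 1, hkm1⟩ : Fin k) : ℕ) + 1 = k by
          show k - 1 + 1 = k; omega]
        rw [hentry k le_rfl i' t', hode t']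
        calc ∑ b : Fin k, ∑ j : Fin d, ((C (b : ℕ) i' j : ℝ) : ℂ) * Y t' (b, j)
            = ∑ b : Fin k, ∑ j : Fin d, ((C (b : ℕ) i' j : ℝ) : ℂ)
                * (((iteratedDeriv (b : ℕ) U t') j c : ℝ) : ℂ) := by
              refine Finset.sum_congr rfl fun b _ => Finset.sum_congr rfl fun j _ => ?_
              rw [show Y t' (b, j) = iteratedDeriv (b : ℕ) (g j) t' from rfl,
                hentry (b : ℕ) b.isLt.le j t']
          _ = ∑ b ∈ Finset.range k, ∑ j : Fin d, ((C b i' j : ℝ) : ℂ)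
                * (((iteratedDeriv b U t') j c : ℝ) : ℂ) :=
              Fin.sum_univ_eq_sum_range
                (fun bn => ∑ j : Fin d, ((C bn i' j : ℝ) : ℂ)
                  * (((iteratedDeriv bn U t') j c : ℝ) : ℂ)) k
          _ = (((∑ b ∈ Finset.range k, C b * iteratedDeriv b U t') i' c : ℝ) : ℂ) := by
              rw [Matrix.sum_apply]
              push_cast
              refine Finset.sum_congr rfl fun b _ => ?_
              rw [Matrix.mul_apply]
              push_cast
              rfl
      rw [hval]; exact hdiff
    · have hlt : (a : ℕ) + 1 < k := by have := a.isLt; omega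
      rw [hMshift (Y t') a i' ha hlt]
      exact hdiff
  -- the bidiagonal matrix L
  set S : Matrix (Fin N) (Fin N) ℂ :=
    Matrix.of (fun i' j' : Fin N => if (j' : ℕ) + 1 = (i' : ℕ) then 1 else 0) with hSdef
  set L : Matrix (Fin N) (Fin N) ℂ :=
    Matrix.diagonal (fun j : Fin N => lam (j : ℕ)) + S with hLdef
  have hSmulVec : ∀ (x : Fin N → ℂ) (j : Fin N),
      (S.mulVec x) j = if h : (j : ℕ) = 0 then 0 else x ⟨(j : ℕ) - 1, by omega⟩ := by
    intro x j
    simp only [Matrix.mulVec, dotProduct, hSdef, Matrix.of_apply]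
    split
    · next h => exact Finset.sum_eq_zero fun w _ => by rw [if_neg (by omega), zero_mul]
    · next h =>
      rw [Finset.sum_eq_single (⟨(j : ℕ) - 1, by omega⟩ : Fin N)]
      · rw [if_pos (show (j : ℕ) - 1 + 1 = (j : ℕ) by omega), one_mul]
      · intro w _ hw
        rw [if_neg (fun hc => hw (Fin.ext (show (w : ℕ) = (j : ℕ) - 1 by omega))), zero_mul]
      · intro h'; exact absurd (Finset.mem_univ _) h'
  have hSmulM : ∀ (B : Matrix (Fin N) (Fin N) ℂ) (j w0 : Fin N),
      (S * B) j w0 = if h : (j : ℕ) = 0 then 0 else B ⟨(j : ℕ) - 1, by omega⟩ w0 := by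
    intro B j w0
    have h := hSmulVec (fun w => B w w0) j
    rw [Matrix.mul_apply]
    simpa [Matrix.mulVec, dotProduct] using h
  -- the first-order system satisfied by the r's
  set Rv : ℝ → Fin N → ℂ := fun s j => r (j : ℕ) s with hRvdef
  have hRd : ∀ (j : Fin N) (t' : ℝ), HasDerivAt (fun s => Rv s j) ((L.mulVec (Rv t')) j) t' := by
    intro j t'
    have hsm := hsmooth (j : ℕ) j.isLt
    have hdiff : DifferentiableAt ℝ (r (j : ℕ)) t' :=
      (hsm.differentiable (by simp)).differentiableAt
    have hval : (L.mulVec (Rv t')) j = deriv (r (j : ℕ)) t' := by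
      rw [hLdef, Matrix.add_mulVec, Pi.add_apply, Matrix.mulVec_diagonal, hSmulVec]
      by_cases hj : (j : ℕ) = 0
      · rw [dif_pos hj, add_zero]
        show lam (j : ℕ) * r (j : ℕ) t' = _
        rw [hj, hr0 t']
      · rw [dif_neg hj, hrj (j : ℕ) (by omega) j.isLt t']
        show lam (j : ℕ) * r (j : ℕ) t' + r ((j : ℕ) - 1) t' = _
        ring
    rw [hval]
    exact hdiff.hasDerivAt
  have hRitd : ∀ (m : ℕ) (j : Fin N) (s : ℝ),
      iteratedDeriv m (r (j : ℕ)) s = ((L ^ m).mulVec (Rv s)) j := by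
    intro m j s
    exact Stmt6Aux.itd_mulVec L Rv hRd m j s
  -- values of the iterated derivatives of the r's at 0
  have hRv0 : ∀ j : Fin N, Rv 0 j = if (j : ℕ) = 0 then 1 else 0 := by
    intro j
    by_cases hj : (j : ℕ) = 0
    · rw [if_pos hj]; show r (j : ℕ) 0 = 1; rw [hj, hr00]
    · rw [if_neg hj]; exact hrj0 _ (by omega) j.isLt
  have hrho : ∀ (m : ℕ) (j : Fin N),
      iteratedDeriv m (r (j : ℕ)) 0 = (L ^ m) j ⟨0, h0N⟩ := by
    intro m j
    rw [hRitd m j 0]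
    simp only [Matrix.mulVec, dotProduct]
    rw [Finset.sum_eq_single (⟨0, h0N⟩ : Fin N)]
    · rw [hRv0, if_pos rfl, mul_one]
    · intro w _ hw
      rw [hRv0, if_neg (fun hc => hw (Fin.ext (show (w : ℕ) = 0 from hc))), mul_zero]
    · intro h'; exact absurd (Finset.mem_univ _) h'
  have htri : ∀ m : ℕ,
      (∀ j : Fin N, m < (j : ℕ) → (L ^ m) j ⟨0, h0N⟩ = 0) ∧
      (∀ j : Fin N, (j : ℕ) = m → (L ^ m) j ⟨0, h0N⟩ = 1) := by
    intro m
    induction m with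
    | zero =>
      constructor
      · intro j hj
        rw [pow_zero, Matrix.one_apply_ne (fun hc => by rw [hc] at hj; simp at hj)]
      · intro j hj
        rw [pow_zero, show j = ⟨0, h0N⟩ from Fin.ext hj, Matrix.one_apply_eq]
    | succ m ih =>
      have hrec : ∀ j : Fin N, (L ^ (m + 1)) j ⟨0, h0N⟩
          = lam (j : ℕ) * (L ^ m) j ⟨0, h0N⟩
            + (if h : (j : ℕ) = 0 then 0 else (L ^ m) ⟨(j : ℕ) - 1, by omega⟩ ⟨0, h0N⟩) := by
        intro j
        rw [pow_succ', hLdef, Matrix.add_mul, Matrix.add_apply, Matrix.diagonal_mul, hSmulM]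
      constructor
      · intro j hj
        rw [hrec j, ih.1 j (by omega), mul_zero, zero_add, dif_neg (show ¬(j : ℕ) = 0 by omega)]
        exact ih.1 _ (show m < (j : ℕ) - 1 by omega)
      · intro j hj
        rw [hrec j, ih.1 j (by omega), mul_zero, zero_add, dif_neg (show ¬(j : ℕ) = 0 by omega)]
        exact ih.2 _ (show (j : ℕ) - 1 = m by omega)
  have hrho0 : ∀ (m jn : ℕ), jn < N → m < jn → iteratedDeriv m (r jn) 0 = 0 :=
    fun m jn hjn hmj => (hrho m ⟨jn, hjn⟩).trans ((htri m).1 ⟨jn, hjn⟩ hmj)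
  have hrho1 : ∀ m : ℕ, m < N → iteratedDeriv m (r m) 0 = 1 :=
    fun m hm => (hrho m ⟨m, hm⟩).trans ((htri m).2 ⟨m, hm⟩ rfl)
  -- characteristic polynomial
  set p : Polynomial ℂ := ∏ j ∈ Finset.range N, (X - Polynomial.C (lam j)) with hpdef
  have hLchar : L.charpoly = p := by
    have htriL : (Matrix.charmatrix L).BlockTriangular OrderDual.toDual := by
      intro a b hab
      have hab' : a < b := OrderDual.toDual_lt_toDual.mp hab
      rw [Matrix.charmatrix_apply_ne _ _ _ (ne_of_lt hab')]
      have hz : L a b = 0 := by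
        rw [hLdef, Matrix.add_apply, Matrix.diagonal_apply_ne _ (ne_of_lt hab'), zero_add,
          hSdef, Matrix.of_apply, if_neg (by omega : ¬(b : ℕ) + 1 = (a : ℕ))]
      rw [hz]; simp
    have hdet : L.charpoly = ∏ i' : Fin N, (Matrix.charmatrix L) i' i' :=
      Matrix.det_of_lowerTriangular _ htriL
    rw [hdet, hpdef, ← Fin.prod_univ_eq_prod_range (fun j => X - Polynomial.C (lam j)) N]
    refine Finset.prod_congr rfl fun i' _ => ?_
    rw [Matrix.charmatrix_apply_eq]
    have : L i' i' = lam (i' : ℕ) := by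
      rw [hLdef, Matrix.add_apply, Matrix.diagonal_apply_eq, hSdef, Matrix.of_apply,
        if_neg (by omega : ¬(i' : ℕ) + 1 = (i' : ℕ)), add_zero]
    rw [this]
  have hmonic : p.Monic := by rw [← hchar]; exact Mc.charpoly_monic
  have hpdeg : p.natDegree = N := by
    rw [← hchar, Matrix.charpoly_natDegree_eq_dim]
    simp [hNdef, Fintype.card_prod]
  have hCHM : Mc ^ N = ∑ j ∈ Finset.range N, (-(p.coeff j)) • Mc ^ j :=
    Stmt6Aux.CH_pow Mc p (by rw [← hchar]; exact Mc.aeval_self_charpoly) hmonic hpdeg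
  have hCHL : L ^ N = ∑ j ∈ Finset.range N, (-(p.coeff j)) • L ^ j :=
    Stmt6Aux.CH_pow L p (by rw [← hLchar]; exact L.aeval_self_charpoly) hmonic hpdeg
  -- power formula for iterated derivatives of entries of U
  have hP : ∀ (a : Fin k) (i' : Fin d) (m : ℕ) (s : ℝ),
      ((Mc ^ m).mulVec (Y s)) (a, i') = iteratedDeriv ((a : ℕ) + m) (g i') s := by
    intro a i' m s
    have h1 := Stmt6Aux.itd_mulVec Mc Y hYd m (a, i') s
    have h2 : (fun s => Y s (a, i')) = iteratedDeriv (a : ℕ) (g i') := rfl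
    rw [h2, Stmt6Aux.itd_itd] at h1
    exact h1.symm
  -- matching of initial conditions
  have star : ∀ m : ℕ, m < N → ∀ i' : Fin d,
      iteratedDeriv m (g i') 0 = ∑ j ∈ Finset.range N, iteratedDeriv m (r j) 0 * Q j i' c := by
    intro m
    induction m using Nat.strong_induction_on with
    | _ m IH =>
      intro hm i'
      have htrunc : ∑ j ∈ Finset.range N, iteratedDeriv m (r j) 0 * Q j i' c
          = Q m i' c + ∑ j ∈ Finset.range m, iteratedDeriv m (r j) 0 * Q j i' c := by
        rw [← Finset.sum_range_add_sum_Ico _ (show m + 1 ≤ N from hm)]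
        rw [Finset.sum_eq_zero (s := Finset.Ico (m + 1) N) (fun j hj => by
          rw [hrho0 m j (Finset.mem_Ico.mp hj).2
            (by have := (Finset.mem_Ico.mp hj).1; omega), zero_mul])]
        rw [add_zero, Finset.sum_range_succ, hrho1 m hm, one_mul, add_comm]
      rw [htrunc]
      by_cases hmk : m < k
      · have hL : iteratedDeriv m (g i') 0 = ((U0 m i' c : ℝ) : ℂ) := by
          rw [hentry m hmk.le i' 0, hinit m hmk]
        rw [hL]
        rcases Nat.eq_zero_or_pos m with hm0 | hm1
        · subst hm0
          simp [hQ0]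
        · have hqe : Q m i' c = ((U0 m i' c : ℝ) : ℂ)
              - ∑ j ∈ Finset.range m, iteratedDeriv m (r j) 0 * Q j i' c := by
            rw [hQ1 m hm1 hmk]
            simp [Matrix.sub_apply, Matrix.sum_apply, Matrix.smul_apply, smul_eq_mul,
              Matrix.map_apply]
          rw [hqe]; ring
      · obtain ⟨nn, rfl⟩ : ∃ nn, m = k + nn := ⟨m - k, by omega⟩
        have hnnN : k * (d - 1) + k = N := by
          obtain ⟨d', rfl⟩ : ∃ d', d = d' + 1 := ⟨d - 1, by omega⟩
          have hd1 : d' + 1 - 1 = d' := rfl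
          rw [hd1, hNdef]; ring
        have hnn : nn < k * (d - 1) := by omega
        have hdag : iteratedDeriv (k + nn) (g i') 0
            = ∑ b : Fin k, ∑ j' : Fin d, ((C (b : ℕ) i' j' : ℝ) : ℂ)
                * iteratedDeriv ((b : ℕ) + nn) (g j') 0 := by
          have h1 : iteratedDeriv (k + nn) (g i') 0
              = ((Mc ^ (nn + 1)).mulVec (Y 0)) (⟨k - 1, hkm1⟩, i') := by
            rw [hP ⟨k - 1, hkm1⟩ i' (nn + 1) 0]
            congr 1
            show k + nn = (k - 1) + (nn + 1)
            omega
          rw [h1, pow_succ', ← Matrix.mulVec_mulVec, hMrow]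
          refine Finset.sum_congr rfl fun b _ => Finset.sum_congr rfl fun j' _ => ?_
          rw [hP b j' nn 0]
        rw [hdag]
        have hQentry : Q (k + nn) i' c
            = (∑ b ∈ Finset.range k, ∑ j' : Fin d, ((C b i' j' : ℝ) : ℂ)
                * (∑ j ∈ Finset.range (b + nn + 1), iteratedDeriv (b + nn) (r j) 0 * Q j j' c))
              - ∑ j ∈ Finset.range (k + nn), iteratedDeriv (k + nn) (r j) 0 * Q j i' c := by
          rw [hQ2 nn hnn]
          simp only [Matrix.sub_apply, Matrix.sum_apply, Matrix.mul_apply, Matrix.smul_apply,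
            smul_eq_mul, Matrix.map_apply]
        have hinner : ∀ b : ℕ, b < k → ∀ j' : Fin d,
            ∑ j ∈ Finset.range (b + nn + 1), iteratedDeriv (b + nn) (r j) 0 * Q j j' c
              = iteratedDeriv (b + nn) (g j') 0 := by
          intro b hb j'
          have hbN : b + nn + 1 ≤ N := by omega
          rw [IH (b + nn) (by omega) (by omega) j']
          rw [← Finset.sum_range_add_sum_Ico
            (fun j => iteratedDeriv (b + nn) (r j) 0 * Q j j' c) hbN]
          rw [Finset.sum_eq_zero (s := Finset.Ico (b + nn + 1) N) (fun j hj => by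
            rw [hrho0 (b + nn) j (Finset.mem_Ico.mp hj).2
              (by have := (Finset.mem_Ico.mp hj).1; omega), zero_mul])]
          rw [add_zero]
        have hrw : (∑ b ∈ Finset.range k, ∑ j' : Fin d, ((C b i' j' : ℝ) : ℂ)
              * (∑ j ∈ Finset.range (b + nn + 1), iteratedDeriv (b + nn) (r j) 0 * Q j j' c))
            = ∑ b ∈ Finset.range k, ∑ j' : Fin d, ((C b i' j' : ℝ) : ℂ)
              * iteratedDeriv (b + nn) (g j') 0 :=
          Finset.sum_congr rfl fun b hb => Finset.sum_congr rfl fun j' _ => by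
            rw [hinner b (Finset.mem_range.mp hb) j']
        rw [hQentry, hrw, sub_add_cancel]
        exact Fin.sum_univ_eq_sum_range
          (fun bn => ∑ j' : Fin d, ((C bn i' j' : ℝ) : ℂ) * iteratedDeriv (bn + nn) (g j') 0) k
  -- the two solutions of the companion system
  have hk0 : 0 < k := hk
  set Ac : Matrix (Fin N) (Fin N) ℂ := Stmt6Aux.comp N p.coeff with hAcdef
  set w1 : Fin k × Fin d → ℂ :=
    fun v => if v = ((⟨0, hk0⟩ : Fin k), i) then 1 else 0 with hw1def
  set zg : ℝ → Fin N → ℂ :=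
    fun s m => ∑ v, w1 v * ((Mc ^ (m : ℕ)).mulVec (Y s)) v with hzgdef
  set zw : ℝ → Fin N → ℂ :=
    fun s m => ∑ j : Fin N, Q (j : ℕ) i c * ((L ^ (m : ℕ)).mulVec (Rv s)) j with hzwdef
  have hzgval : ∀ (s : ℝ) (m : Fin N), zg s m = iteratedDeriv (m : ℕ) (g i) s := by
    intro s m
    rw [hzgdef]
    simp only [hw1def, ite_mul, one_mul, zero_mul]
    rw [Finset.sum_ite_eq' Finset.univ ((⟨0, hk0⟩ : Fin k), i)
      (fun v => ((Mc ^ (m : ℕ)).mulVec (Y s)) v), if_pos (Finset.mem_univ _)]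
    rw [hP ⟨0, hk0⟩ i (m : ℕ) s]
    norm_num
  have hdg : ∀ s : ℝ, HasDerivAt zg (Ac.mulVec (zg s)) s := by
    intro s
    refine hasDerivAt_pi.mpr fun m => ?_
    exact Stmt6Aux.comp_system p.coeff Mc hCHM Y hYd w1 s m
  have hdw : ∀ s : ℝ, HasDerivAt zw (Ac.mulVec (zw s)) s := by
    intro s
    refine hasDerivAt_pi.mpr fun m => ?_
    exact Stmt6Aux.comp_system p.coeff L hCHL Rv hRd (fun j => Q (j : ℕ) i c) s m
  have h00 : zg 0 = zw 0 := by
    funext m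
    rw [hzgval 0 m, star (m : ℕ) m.isLt i, hzwdef]
    rw [← Fin.sum_univ_eq_sum_range (fun j => iteratedDeriv (m : ℕ) (r j) 0 * Q j i c) N]
    refine Finset.sum_congr rfl fun j _ => ?_
    rw [← hRitd (m : ℕ) j 0]; ring
  have hfinal := Stmt6Aux.linear_ODE_unique Ac zg zw hdg hdw h00 t
  have h1 : ((U t i c : ℝ) : ℂ) = zg t ⟨0, h0N⟩ := by
    rw [hzgval t ⟨0, h0N⟩]
    rfl
  rw [h1, hfinal, hzwdef]
  rw [← Fin.sum_univ_eq_sum_range (fun j => r j t * Q j i c) N]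
  refine Finset.sum_congr rfl fun j _ => ?_
  have : ((L ^ ((⟨0, h0N⟩ : Fin N) : ℕ)).mulVec (Rv t)) j = r (j : ℕ) t := by
    rw [show ((⟨0, h0N⟩ : Fin N) : ℕ) = 0 from rfl, pow_zero, Matrix.one_mulVec]
  rw [this]; ring
end

section
/- (Lagrange's identity.) Let n ≥ 1, let a₁, …, aₙ ∈ ℂ be pairwise distinct, let b₁, …, b_{n−1} ∈ ℂ, and let z ∈ ℂ. Then Σ_{k=1}^{n} (∏_{j=1}^{n−1} (a_k + b_j) · ∏_{i≠k} (a_i − z)) / (∏_{i≠k} (a_i − a_k)) = ∏_{k=1}^{n−1} (z + b_k). -/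
/-- **Lagrange's identity.** For pairwise distinct `a₁, …, aₙ ∈ ℂ`,
`b₁, …, b_{n−1} ∈ ℂ` and `z ∈ ℂ`,
`∑ₖ (∏ⱼ (aₖ + bⱼ) ⋅ ∏_{i≠k} (aᵢ − z)) / ∏_{i≠k} (aᵢ − aₖ) = ∏ₖ (z + bₖ)`. -/
theorem stmt9 (n : ℕ) (hn : 1 ≤ n) (a : Fin n → ℂ) (ha : Function.Injective a)
    (b : Fin (n - 1) → ℂ) (z : ℂ) :
    ∑ k, ((∏ j, (a k + b j)) * ∏ i ∈ Finset.univ.erase k, (a i - z)) /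
        ∏ i ∈ Finset.univ.erase k, (a i - a k)
      = ∏ j, (z + b j) := by
  classical
  set P : Polynomial ℂ := ∏ j, (Polynomial.X + Polynomial.C (b j)) with hP
  have hinj : Set.InjOn a (Finset.univ : Finset (Fin n)) := fun x _ y _ h => ha h
  have hdeg : P.degree < (Finset.univ : Finset (Fin n)).card := by
    have h1 : P.degree ≤ (n - 1 : ℕ) := by
      calc P.degree ≤ ∑ j : Fin (n-1), (Polynomial.X + Polynomial.C (b j)).degree :=
            Polynomial.degree_prod_le _ _
        _ ≤ ∑ j : Fin (n-1), (1 : WithBot ℕ) := by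
            refine Finset.sum_le_sum fun j _ => ?_
            simpa using Polynomial.degree_add_le_of_degree_le
              (le_of_eq Polynomial.degree_X) (Polynomial.degree_C_le.trans (by norm_num))
        _ = ((n - 1 : ℕ) : WithBot ℕ) := by
            rw [Finset.sum_const, Finset.card_univ, Fintype.card_fin]
            simp [nsmul_eq_mul]
    refine lt_of_le_of_lt h1 ?_
    rw [Finset.card_univ, Fintype.card_fin, Nat.cast_lt]
    omega
  have key := Lagrange.eq_interpolate (v := a) hinj hdeg
  have hz := congrArg (Polynomial.eval z) key
  have hevalP : ∀ w : ℂ, P.eval w = ∏ j, (w + b j) := by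
    intro w; simp [hP, Polynomial.eval_prod]
  rw [hevalP z] at hz
  rw [hz, Lagrange.interpolate_apply, Polynomial.eval_finset_sum]
  refine Finset.sum_congr rfl fun k _ => ?_
  rw [Polynomial.eval_mul, Polynomial.eval_C, hevalP (a k), Lagrange.basis,
    Polynomial.eval_prod]
  rw [div_eq_iff]
  · rw [mul_assoc, ← Finset.prod_mul_distrib]
    congr 1
    refine Finset.prod_congr rfl fun i hi => ?_
    have hik : a i ≠ a k := fun h => (Finset.mem_erase.mp hi).1 (ha h)
    rw [Lagrange.basisDivisor]
    simp only [Polynomial.eval_mul, Polynomial.eval_C, Polynomial.eval_sub, Polynomial.eval_X]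
    have h : a k - a i ≠ 0 := sub_ne_zero.mpr hik.symm
    field_simp [h]
    ring
  · exact Finset.prod_ne_zero_iff.mpr fun i hi =>
      sub_ne_zero.mpr (fun h => (Finset.mem_erase.mp hi).1 (ha h))
end

section
/- Let T > 0, d ≥ 1, and let σ : [0, T] → ℝ^{d×d} be continuous. The following are equivalent: (a) there exists a continuous χ : [0, T] → ℝ^{d×d} with σ(t) = χ(t) − ∫_t^T χ(u)ᵀ χ(u) du for every t ∈ [0, T]; (b) there exists a continuously differentiable R : [0, T] → ℝ^{d×d} solving the Riccati terminal value problem associated with σ. Moreover, if R is as in (b) then χ := R + σ satisfies (a), and if χ is as in (a) then R := χ − σ is continuously differentiable and satisfies (b). -/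
open Matrix Set MeasureTheory

attribute [local instance] Matrix.frobeniusSeminormedAddCommGroup
  Matrix.frobeniusNormedAddCommGroup Matrix.frobeniusNormedSpace

/-- `R : [0,T] → ℝ^{d×d}` is a continuously differentiable solution of the Riccati terminal
value problem `R′ = −R² − σᵀ R − R σ − σᵀ σ` on `[0,T]`, `R(T) = 0`. -/
def IsRiccatiSol {d : ℕ} (T : ℝ) (σ R : ℝ → Matrix (Fin d) (Fin d) ℝ) : Prop :=
  ∃ R' : ℝ → Matrix (Fin d) (Fin d) ℝ,
    ContinuousOn R' (Icc 0 T) ∧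
    (∀ t ∈ Icc 0 T, HasDerivWithinAt R (R' t) (Icc 0 T) t) ∧
    (∀ t ∈ Icc 0 T,
      R' t = -(R t * R t) - (σ t)ᵀ * R t - R t * σ t - (σ t)ᵀ * σ t) ∧
    R T = 0

/-- `χ : [0,T] → ℝ^{d×d}` is continuous and satisfies
`σ(t) = χ(t) − ∫ₜ^T χ(u)ᵀ χ(u) du` on `[0,T]`. -/
def IsChiRep {d : ℕ} (T : ℝ) (σ χ : ℝ → Matrix (Fin d) (Fin d) ℝ) : Prop :=
  ContinuousOn χ (Icc 0 T) ∧
  ∀ t ∈ Icc 0 T, σ t = χ t - ∫ u in t..T, (χ u)ᵀ * χ u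


variable {d : ℕ}

noncomputable instance matENormedAddMonoid : ENormedAddMonoid (Matrix (Fin d) (Fin d) ℝ) :=
  (inferInstance : @ENormedAddMonoid _ (PseudoMetricSpace.toUniformSpace.toTopologicalSpace))

instance matPMS : TopologicalSpace.PseudoMetrizableSpace (Matrix (Fin d) (Fin d) ℝ) :=
  (inferInstance : @TopologicalSpace.PseudoMetrizableSpace _
    (PseudoMetricSpace.toUniformSpace.toTopologicalSpace))

noncomputable def trCLM (d : ℕ) :
    Matrix (Fin d) (Fin d) ℝ →L[ℝ] Matrix (Fin d) (Fin d) ℝ :=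
  LinearMap.toContinuousLinearMap
    ((Matrix.transposeLinearEquiv (Fin d) (Fin d) ℝ ℝ).toLinearMap)

@[simp] lemma trCLM_apply (A : Matrix (Fin d) (Fin d) ℝ) : trCLM d A = Aᵀ := rfl

lemma integral_transpose {f : ℝ → Matrix (Fin d) (Fin d) ℝ} {a b : ℝ}
    (hf : IntervalIntegrable f volume a b) :
    (∫ u in a..b, f u)ᵀ = ∫ u in a..b, (f u)ᵀ := by
  have := (trCLM d).intervalIntegral_comp_comm hf
  exact this.symm

lemma chi_to_ric (T : ℝ) (hT : 0 < T) (σ χ : ℝ → Matrix (Fin d) (Fin d) ℝ)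
    (h : IsChiRep T σ χ) : IsRiccatiSol T σ (fun t => χ t - σ t) := by
  obtain ⟨hχ, hrep⟩ := h
  set F : ℝ → Matrix (Fin d) (Fin d) ℝ := fun u => (χ u)ᵀ * χ u with hF
  have hFcont : ContinuousOn F (Icc 0 T) := by
    exact ContinuousOn.mul (continuous_id.matrix_transpose.comp_continuousOn hχ) hχ
  have hFint : ∀ t ∈ Icc 0 T, IntervalIntegrable F volume t T := by
    intro t ht
    exact (hFcont.mono (by rw [uIcc_of_le ht.2]; exact Icc_subset_Icc ht.1 le_rfl)).intervalIntegrable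
  have hRval : ∀ t ∈ Icc 0 T, χ t - σ t = ∫ u in t..T, F u := by
    intro t ht
    rw [hrep t ht]; abel
  refine ⟨fun t => -F t, hFcont.neg, ?_, ?_, ?_⟩
  · intro t ht
    haveI : Fact (t ∈ Icc 0 T) := ⟨ht⟩
    have hd : HasDerivWithinAt (fun s => ∫ u in s..T, F u) (-F t) (Icc 0 T) t :=
      intervalIntegral.integral_hasDerivWithinAt_left (hFint t ht)
        (hFcont.stronglyMeasurableAtFilter_nhdsWithin measurableSet_Icc t)
        (hFcont t ht)
    exact hd.congr (fun s hs => hRval s hs) (hRval t ht)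
  · intro t ht
    have hsym : (χ t - σ t)ᵀ = χ t - σ t := by
      rw [hRval t ht, integral_transpose (hFint t ht)]
      refine intervalIntegral.integral_congr fun u _ => ?_
      simp [hF, Matrix.transpose_mul, Matrix.transpose_transpose]
    have hχeq : χ t = (χ t - σ t) + σ t := by abel
    have key : -(F t) = -(((χ t - σ t) + σ t)ᵀ * ((χ t - σ t) + σ t)) := by
      rw [← hχeq]
    simp only []
    rw [key, Matrix.transpose_add, hsym]
    noncomm_ring
  · have := hrep T ⟨le_of_lt hT, le_rfl⟩
    rw [intervalIntegral.integral_same] at this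
    simp [this]

lemma ric_to_chi (T : ℝ) (hT : 0 < T) (σ R : ℝ → Matrix (Fin d) (Fin d) ℝ)
    (hσ : ContinuousOn σ (Icc 0 T)) (h : IsRiccatiSol T σ R) :
    IsChiRep T σ (fun t => R t + σ t) := by
  obtain ⟨R', hR'c, hder, heq, hRT⟩ := h
  have hRcont : ContinuousOn R (Icc 0 T) := fun t ht => (hder t ht).continuousWithinAt
  -- transpose versions
  have hRTc : ContinuousOn (fun t => (R t)ᵀ) (Icc 0 T) :=
    (trCLM d).continuous.comp_continuousOn hRcont
  -- symmetry of R via Gronwall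
  set S : ℝ → Matrix (Fin d) (Fin d) ℝ := fun t => R t - (R t)ᵀ with hS
  set S' : ℝ → Matrix (Fin d) (Fin d) ℝ := fun t => R' t - (R' t)ᵀ with hS'
  have hScont : ContinuousOn S (Icc 0 T) := hRcont.sub hRTc
  have hSder : ∀ t ∈ Icc 0 T, HasDerivWithinAt S (S' t) (Icc 0 T) t := by
    intro t ht
    exact (hder t ht).sub ((trCLM d).hasFDerivAt.comp_hasDerivWithinAt t (hder t ht))
  have hS'eq : ∀ t ∈ Icc 0 T,
      S' t = -((R t + (σ t)ᵀ) * S t) - S t * ((R t)ᵀ + σ t) := by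
    intro t ht
    simp only [hS', hS, heq t ht, Matrix.transpose_sub, Matrix.transpose_neg,
      Matrix.transpose_mul, Matrix.transpose_transpose]
    noncomm_ring
  -- bound K
  obtain ⟨K, hK⟩ : ∃ K, ∀ t ∈ Icc 0 T, ‖R t + (σ t)ᵀ‖ + ‖(R t)ᵀ + σ t‖ ≤ K := by
    have hc : ContinuousOn (fun t => ‖R t + (σ t)ᵀ‖ + ‖(R t)ᵀ + σ t‖) (Icc 0 T) :=
      ((hRcont.add ((trCLM d).continuous.comp_continuousOn hσ)).norm).add
        ((hRTc.add hσ).norm)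
    obtain ⟨x, -, hx⟩ := isCompact_Icc.exists_isMaxOn (nonempty_Icc.2 hT.le) hc
    exact ⟨_, fun t ht => hx ht⟩
  have hbound : ∀ t ∈ Icc 0 T, ‖S' t‖ ≤ K * ‖S t‖ := by
    intro t ht
    rw [hS'eq t ht]
    calc ‖-((R t + (σ t)ᵀ) * S t) - S t * ((R t)ᵀ + σ t)‖
        ≤ ‖-((R t + (σ t)ᵀ) * S t)‖ + ‖S t * ((R t)ᵀ + σ t)‖ := norm_sub_le _ _
      _ ≤ ‖R t + (σ t)ᵀ‖ * ‖S t‖ + ‖S t‖ * ‖(R t)ᵀ + σ t‖ := by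
          rw [norm_neg]
          exact add_le_add (Matrix.frobenius_norm_mul _ _) (Matrix.frobenius_norm_mul _ _)
      _ = (‖R t + (σ t)ᵀ‖ + ‖(R t)ᵀ + σ t‖) * ‖S t‖ := by ring
      _ ≤ K * ‖S t‖ := by
          have := hK t ht
          have h0 : (0:ℝ) ≤ ‖S t‖ := norm_nonneg _
          nlinarith [norm_nonneg (S t)]
  -- Gronwall applied to g u = S (T - u)
  have hmaps : MapsTo (fun u : ℝ => T - u) (Icc 0 T) (Icc 0 T) := by
    intro u hu; constructor <;> simp at hu ⊢ <;> linarith [hu.1, hu.2]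
  have hSsym : ∀ t ∈ Icc 0 T, S t = 0 := by
    have hg : ∀ x ∈ Icc (0:ℝ) T, ‖S (T - x)‖ ≤ gronwallBound 0 K 0 (x - 0) := by
      refine norm_le_gronwallBound_of_norm_deriv_right_le
        (f := fun u => S (T - u)) (f' := fun u => (-1 : ℝ) • S' (T - u)) ?_ ?_ ?_ ?_
      · exact hScont.comp (continuous_const.sub continuous_id).continuousOn hmaps
      · intro x hx
        have hx' : T - x ∈ Icc 0 T := hmaps ⟨hx.1, hx.2.le⟩
        have hφ : HasDerivWithinAt (fun u : ℝ => T - u) (-1) (Icc 0 T) x :=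
          ((hasDerivAt_id x).const_sub T).hasDerivWithinAt
        have := (hSder (T - x) hx').scomp (h := fun u : ℝ => T - u) x hφ hmaps
        exact this.mono_of_mem_nhdsWithin (Icc_mem_nhdsGE_of_mem hx)
      · simp [hS, hRT]
      · intro x hx
        have hx' : T - x ∈ Icc 0 T := hmaps ⟨hx.1, hx.2.le⟩
        rw [norm_smul]
        simpa using (hbound (T - x) hx')
    intro t ht
    have ht' : T - t ∈ Icc 0 T := hmaps ht
    have := hg (T - t) ht'
    rw [gronwallBound_ε0_δ0] at this
    have : ‖S (T - (T - t))‖ ≤ 0 := by simpa using this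
    have h0 : S (T - (T - t)) = 0 := norm_le_zero_iff.mp this
    simpa using h0
  have hRsym : ∀ t ∈ Icc 0 T, (R t)ᵀ = R t := by
    intro t ht
    have := hSsym t ht
    simp only [hS, sub_eq_zero] at this
    exact this.symm
  -- the representation
  refine ⟨hRcont.add hσ, ?_⟩
  intro t ht
  have hR'int : IntervalIntegrable R' volume t T :=
    (hR'c.mono (by rw [uIcc_of_le ht.2]; exact Icc_subset_Icc ht.1 le_rfl)).intervalIntegrable
  have hFTC : ∫ u in t..T, R' u = R T - R t := by
    refine intervalIntegral.integral_eq_sub_of_hasDeriv_right_of_le ht.2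
      (hRcont.mono (Icc_subset_Icc ht.1 le_rfl)) ?_ hR'int
    intro x hx
    have hx' : x ∈ Icc 0 T := ⟨ht.1.trans hx.1.le, hx.2.le⟩
    refine (hder x hx').mono_of_mem_nhdsWithin
      (Filter.mem_of_superset (Ioc_mem_nhdsGT_of_mem ⟨le_rfl, hx.2⟩) ?_)
    exact fun y hy => ⟨ht.1.trans (hx.1.trans hy.1).le, hy.2⟩
  have hcongr : ∫ u in t..T, ((fun s => R s + σ s) u)ᵀ * ((fun s => R s + σ s) u)
      = ∫ u in t..T, -(R' u) := by
    refine intervalIntegral.integral_congr fun u hu => ?_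
    rw [uIcc_of_le ht.2] at hu
    have hu' : u ∈ Icc 0 T := ⟨ht.1.trans hu.1, hu.2⟩
    simp only [Matrix.transpose_add, hRsym u hu', heq u hu']
    noncomm_ring
  simp only []
  rw [hcongr, intervalIntegral.integral_neg, hFTC, hRT]
  abel

/-- For continuous `σ : [0,T] → ℝ^{d×d}` the following are equivalent:
(a) some continuous `χ` satisfies `σ = χ − ∫_·^T χᵀχ`; (b) the Riccati terminal value problem
associated with `σ` has a continuously differentiable solution.  Moreover any Riccati solution
`R` yields `χ := R + σ` satisfying (a), and any `χ` as in (a) yields the Riccati solution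
`R := χ − σ`. -/
theorem stmt10 (T : ℝ) (hT : 0 < T) (d : ℕ) (hd : 1 ≤ d)
    (σ : ℝ → Matrix (Fin d) (Fin d) ℝ) (hσ : ContinuousOn σ (Icc 0 T)) :
    ((∃ χ, IsChiRep T σ χ) ↔ (∃ R, IsRiccatiSol T σ R)) ∧
    (∀ R, IsRiccatiSol T σ R → IsChiRep T σ (fun t => R t + σ t)) ∧
    (∀ χ, IsChiRep T σ χ → IsRiccatiSol T σ (fun t => χ t - σ t)) := by
  refine ⟨⟨fun ⟨χ, h⟩ => ⟨_, chi_to_ric T hT σ χ h⟩,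
    fun ⟨R, h⟩ => ⟨_, ric_to_chi T hT σ R hσ h⟩⟩,
    fun R h => ric_to_chi T hT σ R hσ h,
    fun χ h => chi_to_ric T hT σ χ h⟩
end

section
/- Let T > 0, d ≥ 1, let σ : [0, T] → ℝ^{d×d} be continuous, and let R : [0, T] → ℝ^{d×d} be a continuously differentiable solution of the Riccati terminal value problem associated with σ. Then for every t ∈ [0, T]: R(t) = ∫_t^T (R(s) + σ(s)ᵀ)(R(s) + σ(s)) ds, R(t)ᵀ = R(t), and R(t) is positive semidefinite, i.e. ⟨R(t) x, x⟩ ≥ 0 for every x ∈ ℝ^d. -/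
open Matrix Set MeasureTheory

attribute [local instance] Matrix.frobeniusSeminormedAddCommGroup
  Matrix.frobeniusNormedAddCommGroup Matrix.frobeniusNormedSpace

/-- If `R` is a continuously differentiable solution of the Riccati terminal
value problem associated with a continuous `σ : [0,T] → ℝ^{d×d}`, then for every `t ∈ [0,T]`
one has `R(t) = ∫ₜ^T (R(s) + σ(s)ᵀ)(R(s) + σ(s)) ds`, `R(t)` is symmetric, and `R(t)` is
positive semidefinite. -/
theorem stmt11 (T : ℝ) (hT : 0 < T) (d : ℕ) (hd : 1 ≤ d)
    (σ : ℝ → Matrix (Fin d) (Fin d) ℝ) (hσ : ContinuousOn σ (Icc 0 T))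
    (R : ℝ → Matrix (Fin d) (Fin d) ℝ) (hR : IsRiccatiSol T σ R) :
    ∀ t ∈ Icc 0 T,
      R t = (∫ s in t..T, (R s + (σ s)ᵀ) * (R s + σ s)) ∧
      (R t)ᵀ = R t ∧
      ∀ x : Fin d → ℝ, 0 ≤ (R t).mulVec x ⬝ᵥ x := by
  obtain ⟨R', hR'cont, hRderiv, hR'eq, hRT⟩ := hR
  have hRcont : ContinuousOn R (Icc 0 T) := fun u hu => (hRderiv u hu).continuousWithinAt
  -- transpose as a continuous linear map
  let L : Matrix (Fin d) (Fin d) ℝ →L[ℝ] Matrix (Fin d) (Fin d) ℝ :=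
    LinearMap.toContinuousLinearMap
      { toFun := fun M => Mᵀ
        map_add' := fun A B => Matrix.transpose_add A B
        map_smul' := fun c A => Matrix.transpose_smul c A }
  have hL : ∀ M : Matrix (Fin d) (Fin d) ℝ, L M = Mᵀ := fun _ => rfl
  -- Step A : integral identity
  have key : ∀ t ∈ Icc 0 T, R t = ∫ s in t..T, (R s + (σ s)ᵀ) * (R s + σ s) := by
    intro t ht
    have hsub : Icc t T ⊆ Icc 0 T := Icc_subset_Icc ht.1 le_rfl
    have huIcc : uIcc t T = Icc t T := uIcc_of_le ht.2
    have hint : @IntervalIntegrable _ (Matrix.frobeniusNormedAddCommGroup (m := Fin d) (n := Fin d) (α := ℝ)).toUniformSpace.toTopologicalSpace _ R' volume t T := by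
      apply ContinuousOn.intervalIntegrable
      rw [huIcc]; exact hR'cont.mono hsub
    have ftc : (∫ s in t..T, R' s) = R T - R t := by
      apply intervalIntegral.integral_eq_sub_of_hasDeriv_right_of_le ht.2
        (hRcont.mono hsub) _ hint
      intro x hx
      have hx0 : 0 < x := lt_of_le_of_lt ht.1 hx.1
      exact ((hRderiv x ⟨hx0.le, hx.2.le⟩).hasDerivAt
        (Icc_mem_nhds hx0 hx.2)).hasDerivWithinAt
    have hcongr : (∫ s in t..T, (R s + (σ s)ᵀ) * (R s + σ s)) = ∫ s in t..T, -(R' s) := by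
      apply intervalIntegral.integral_congr
      intro s hs
      rw [huIcc] at hs
      show (R s + (σ s)ᵀ) * (R s + σ s) = -R' s
      rw [hR'eq s (hsub hs)]
      noncomm_ring
    rw [hcongr, intervalIntegral.integral_neg, ftc, hRT]
    abel
  -- Step B : symmetry via Gronwall
  have hsymm : ∀ t ∈ Icc 0 T, (R t)ᵀ = R t := by
    -- bound constant
    obtain ⟨C₁, hC₁⟩ := isCompact_Icc.exists_bound_of_continuousOn hRcont
    obtain ⟨C₂, hC₂⟩ := isCompact_Icc.exists_bound_of_continuousOn hσ
    set K : ℝ := 2 * C₁ + 2 * C₂ with hKdef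
    set S : ℝ → Matrix (Fin d) (Fin d) ℝ := fun u => R u - (R u)ᵀ with hSdef
    set S' : ℝ → Matrix (Fin d) (Fin d) ℝ := fun u => R' u - (R' u)ᵀ with hS'def
    have hScont : ContinuousOn S (Icc 0 T) :=
      hRcont.sub (L.continuous.comp_continuousOn hRcont)
    have hSderiv : ∀ u ∈ Icc 0 T, HasDerivWithinAt S (S' u) (Icc 0 T) u := by
      intro u hu
      exact (hRderiv u hu).sub (L.hasFDerivAt.comp_hasDerivWithinAt u (hRderiv u hu))
    have hSbound : ∀ u ∈ Icc 0 T, ‖S' u‖ ≤ K * ‖S u‖ := by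
      intro u hu
      have hSeq : S' u = -(R u * S u + S u * (R u)ᵀ + (σ u)ᵀ * S u + S u * σ u) := by
        simp only [hS'def, hSdef, hR'eq u hu, Matrix.transpose_sub, Matrix.transpose_mul,
          Matrix.transpose_neg, Matrix.transpose_transpose]
        noncomm_ring
      have h1 : ‖R u * S u‖ ≤ C₁ * ‖S u‖ :=
        le_trans (Matrix.frobenius_norm_mul _ _)
          (mul_le_mul_of_nonneg_right (hC₁ u hu) (norm_nonneg _))
      have h2 : ‖S u * (R u)ᵀ‖ ≤ ‖S u‖ * C₁ := by
        refine le_trans (Matrix.frobenius_norm_mul _ _) ?_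
        rw [Matrix.frobenius_norm_transpose]
        exact mul_le_mul_of_nonneg_left (hC₁ u hu) (norm_nonneg _)
      have h3 : ‖(σ u)ᵀ * S u‖ ≤ C₂ * ‖S u‖ := by
        refine le_trans (Matrix.frobenius_norm_mul _ _) ?_
        rw [Matrix.frobenius_norm_transpose]
        exact mul_le_mul_of_nonneg_right (hC₂ u hu) (norm_nonneg _)
      have h4 : ‖S u * σ u‖ ≤ ‖S u‖ * C₂ :=
        le_trans (Matrix.frobenius_norm_mul _ _)
          (mul_le_mul_of_nonneg_left (hC₂ u hu) (norm_nonneg _))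
      calc ‖S' u‖ = ‖R u * S u + S u * (R u)ᵀ + (σ u)ᵀ * S u + S u * σ u‖ := by
            rw [hSeq, norm_neg]
        _ ≤ ‖R u * S u + S u * (R u)ᵀ + (σ u)ᵀ * S u‖ + ‖S u * σ u‖ := norm_add_le _ _
        _ ≤ (‖R u * S u + S u * (R u)ᵀ‖ + ‖(σ u)ᵀ * S u‖) + ‖S u * σ u‖ := by
            gcongr; exact norm_add_le _ _
        _ ≤ ((‖R u * S u‖ + ‖S u * (R u)ᵀ‖) + ‖(σ u)ᵀ * S u‖) + ‖S u * σ u‖ := by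
            gcongr; exact norm_add_le _ _
        _ ≤ ((C₁ * ‖S u‖ + ‖S u‖ * C₁) + C₂ * ‖S u‖) + ‖S u‖ * C₂ := by
            gcongr
        _ = K * ‖S u‖ := by rw [hKdef]; ring
    -- time reversal and Gronwall
    set f : ℝ → Matrix (Fin d) (Fin d) ℝ := fun u => S (T - u) with hfdef
    have hmapsto : MapsTo (fun u : ℝ => T - u) (Icc 0 T) (Icc 0 T) := by
      intro u hu
      simp only [mem_Icc] at hu ⊢
      constructor <;> linarith
    have hgron : ∀ u ∈ Icc 0 T, ‖f u‖ ≤ gronwallBound 0 K 0 (u - 0) := by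
      apply norm_le_gronwallBound_of_norm_deriv_right_le
        (f' := fun u => (-1 : ℝ) • S' (T - u))
      · exact hScont.comp (continuousOn_const.sub continuousOn_id) hmapsto
      · intro u hu
        have hTu : T - u ∈ Icc 0 T := hmapsto ⟨hu.1, hu.2.le⟩
        have hinner : HasDerivWithinAt (fun u : ℝ => T - u) (-1 : ℝ) (Icc 0 T) u := by
          simpa using (hasDerivWithinAt_id u (Icc 0 T)).const_sub T
        have hder : HasDerivWithinAt f ((-1 : ℝ) • S' (T - u)) (Icc 0 T) u :=
          HasDerivWithinAt.scomp u (hSderiv _ hTu) hinner hmapsto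
        exact hder.mono_of_mem_nhdsWithin (Icc_mem_nhdsGE_of_mem hu)
      · simp [hfdef, hSdef, hRT]
      · intro u hu
        have hTu : T - u ∈ Icc 0 T := hmapsto ⟨hu.1, hu.2.le⟩
        simp only [norm_smul, norm_neg, norm_one, one_mul, add_zero]
        exact hSbound _ hTu
    intro t ht
    have htT : T - t ∈ Icc 0 T := hmapsto ht
    have := hgron (T - t) htT
    rw [gronwallBound_ε0_δ0] at this
    have hf0 : f (T - t) = S t := by simp [hfdef]
    rw [hf0] at this
    have : S t = 0 := norm_le_zero_iff.mp this
    have := sub_eq_zero.mp this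
    exact this.symm
  -- wrap up
  intro t ht
  refine ⟨key t ht, hsymm t ht, ?_⟩
  intro x
  -- the continuous linear functional M ↦ ⟨M x, x⟩
  let φ : Matrix (Fin d) (Fin d) ℝ →L[ℝ] ℝ :=
    LinearMap.toContinuousLinearMap
      { toFun := fun M => M.mulVec x ⬝ᵥ x
        map_add' := fun A B => by simp [Matrix.add_mulVec, add_dotProduct]
        map_smul' := fun c A => by simp [Matrix.smul_mulVec, smul_dotProduct] }
  have hφ : ∀ M : Matrix (Fin d) (Fin d) ℝ, φ M = M.mulVec x ⬝ᵥ x := fun _ => rfl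
  have hsub : Icc t T ⊆ Icc 0 T := Icc_subset_Icc ht.1 le_rfl
  have huIcc : uIcc t T = Icc t T := uIcc_of_le ht.2
  have hFcont : ContinuousOn (fun s => (R s + (σ s)ᵀ) * (R s + σ s)) (Icc 0 T) := by
    have hσT : ContinuousOn (fun s => (σ s)ᵀ) (Icc 0 T) :=
      L.continuous.comp_continuousOn hσ
    exact (hRcont.add hσT).mul (hRcont.add hσ)
  have hFint : @IntervalIntegrable _ (Matrix.frobeniusNormedAddCommGroup (m := Fin d) (n := Fin d) (α := ℝ)).toUniformSpace.toTopologicalSpace _ (fun s => (R s + (σ s)ᵀ) * (R s + σ s)) volume t T := by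
    apply ContinuousOn.intervalIntegrable
    rw [huIcc]; exact hFcont.mono hsub
  have hcomm : φ (∫ s in t..T, (R s + (σ s)ᵀ) * (R s + σ s))
      = ∫ s in t..T, φ ((R s + (σ s)ᵀ) * (R s + σ s)) :=
    (φ.intervalIntegral_comp_comm hFint).symm
  rw [← hφ, key t ht, hcomm]
  apply intervalIntegral.integral_nonneg ht.2
  intro s hs
  have hsmem : s ∈ Icc 0 T := hsub hs
  have hBsymm : (σ s)ᵀ + R s = (R s + σ s)ᵀ := by
    rw [Matrix.transpose_add, hsymm s hsmem, add_comm]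
  rw [hφ]
  have : (R s + (σ s)ᵀ) * (R s + σ s) = (R s + σ s)ᵀ * (R s + σ s) := by
    rw [← hBsymm, add_comm (R s) (σ s)ᵀ]
  rw [this]
  set B := R s + σ s
  have : (Bᵀ * B).mulVec x ⬝ᵥ x = B.mulVec x ⬝ᵥ B.mulVec x := by
    rw [← Matrix.mulVec_mulVec, Matrix.mulVec_transpose, ← Matrix.dotProduct_mulVec,
      dotProduct_comm]
  rw [this]
  exact Finset.sum_nonneg fun i _ => mul_self_nonneg _
end

section
/- Let T > 0, d ≥ 1, let σ : [0, T] → ℝ^{d×d} be continuously differentiable, and let S : [0, T] → ℝ^{d×d} be the twice continuously differentiable function satisfying S″(t) = 2 σ_A(t) S′(t) + σ′(t) S(t) for all t ∈ [0, T], S(T) = I_d, and S′(T) = σ(T). Then there exists a continuously differentiable solution R of the Riccati terminal value problem associated with σ if and only if det S(t) ≠ 0 for every t ∈ [0, T]; and if det S(t) ≠ 0 for every t ∈ [0, T], then R(t) = S′(t) S(t)⁻¹ − σ(t) is such a solution. -/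
open Matrix Set MeasureTheory

attribute [local instance] Matrix.frobeniusSeminormedAddCommGroup
  Matrix.frobeniusNormedAddCommGroup Matrix.frobeniusNormedSpace

attribute [local instance] Matrix.frobeniusNormedRing Matrix.frobeniusNormedAlgebra

/-- Grönwall: a function with `‖f′‖ ≤ K ‖f‖` vanishing at the left endpoint vanishes. -/
lemma gronwall_zero_fwd {F : Type*} [NormedAddCommGroup F] [NormedSpace ℝ F]
    {f f' : ℝ → F} {a b K : ℝ}
    (hf : ∀ t ∈ Icc a b, HasDerivWithinAt f (f' t) (Icc a b) t)
    (hb : ∀ t ∈ Icc a b, ‖f' t‖ ≤ K * ‖f t‖)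
    (ha : f a = 0) : ∀ t ∈ Icc a b, f t = 0 := by
  intro t ht
  have hcont : ContinuousOn f (Icc a b) := fun x hx => (hf x hx).continuousWithinAt
  have h1 : ∀ x ∈ Ico a b, HasDerivWithinAt f (f' x) (Ici x) x := fun x hx =>
    (hf x (Ico_subset_Icc_self hx)).mono_of_mem_nhdsWithin
      (Icc_mem_nhdsGE_of_mem hx)
  have h2 := norm_le_gronwallBound_of_norm_deriv_right_le (δ := 0) (ε := 0) (K := K)
    hcont h1 (by simp [ha]) (fun x hx => by simpa using hb x (Ico_subset_Icc_self hx)) t ht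
  rw [gronwallBound_ε0_δ0] at h2
  exact norm_le_zero_iff.mp h2

/-- Grönwall backward: a function with `‖f′‖ ≤ K ‖f‖` vanishing at the right endpoint
vanishes. -/
lemma gronwall_zero_bwd {F : Type*} [NormedAddCommGroup F] [NormedSpace ℝ F]
    {f f' : ℝ → F} {a b K : ℝ}
    (hf : ∀ t ∈ Icc a b, HasDerivWithinAt f (f' t) (Icc a b) t)
    (hb : ∀ t ∈ Icc a b, ‖f' t‖ ≤ K * ‖f t‖)
    (hB : f b = 0) : ∀ t ∈ Icc a b, f t = 0 := by
  have hmap : MapsTo (fun t : ℝ => a + b - t) (Icc a b) (Icc a b) := by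
    intro x hx
    simp only [mem_Icc] at *
    constructor <;> linarith [hx.1, hx.2]
  have key : ∀ t ∈ Icc a b, f (a + b - t) = 0 := by
    apply gronwall_zero_fwd (f' := fun t => -f' (a + b - t)) (K := K)
    · intro t ht
      have hinner : HasDerivWithinAt (fun t : ℝ => a + b - t) (-1) (Icc a b) t :=
        ((hasDerivAt_id t).const_sub (a + b)).hasDerivWithinAt
      have := (hf (a + b - t) (hmap ht)).scomp t hinner hmap
      simpa [Function.comp_def] using this
    · intro t ht
      simpa using hb (a + b - t) (hmap ht)
    · simpa using hB
  intro t ht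
  have := key (a + b - t) (hmap ht)
  rwa [show a + b - (a + b - t) = t by ring] at this

/-- Let `σ : [0,T] → ℝ^{d×d}` be continuously differentiable (with derivative
`σ'`), and let `S` be the twice continuously differentiable solution of
`S″ = 2 σ_A S′ + σ′ S` (where `2 σ_A = σ − σᵀ`) with `S(T) = I`, `S′(T) = σ(T)`.
Then the Riccati terminal value problem associated with `σ` is solvable iff `det S(t) ≠ 0`
for all `t ∈ [0,T]`, in which case `R = S′ S⁻¹ − σ` is a solution. -/
theorem stmt12 (T : ℝ) (hT : 0 < T) (d : ℕ) (hd : 1 ≤ d)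
    (σ σ' : ℝ → Matrix (Fin d) (Fin d) ℝ)
    (hσ' : ContinuousOn σ' (Icc 0 T))
    (hσd : ∀ t ∈ Icc 0 T, HasDerivWithinAt σ (σ' t) (Icc 0 T) t)
    (S S' : ℝ → Matrix (Fin d) (Fin d) ℝ)
    (hSd : ∀ t ∈ Icc 0 T, HasDerivWithinAt S (S' t) (Icc 0 T) t)
    (hS'd : ∀ t ∈ Icc 0 T,
      HasDerivWithinAt S' ((σ t - (σ t)ᵀ) * S' t + σ' t * S t) (Icc 0 T) t)
    (hST : S T = 1) (hS'T : S' T = σ T) :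
    ((∃ R, IsRiccatiSol T σ R) ↔ ∀ t ∈ Icc 0 T, (S t).det ≠ 0) ∧
    ((∀ t ∈ Icc 0 T, (S t).det ≠ 0) →
      IsRiccatiSol T σ (fun t => S' t * (S t)⁻¹ - σ t)) := by
  have hTmem : T ∈ Icc (0:ℝ) T := ⟨hT.le, le_refl T⟩
  have hσc : ContinuousOn σ (Icc 0 T) := fun x hx => (hσd x hx).continuousWithinAt
  have hSc : ContinuousOn S (Icc 0 T) := fun x hx => (hSd x hx).continuousWithinAt
  have hS'c : ContinuousOn S' (Icc 0 T) := fun x hx => (hS'd x hx).continuousWithinAt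
  have hσTc : ContinuousOn (fun t => (σ t)ᵀ) (Icc 0 T) :=
    (continuous_id.matrix_transpose).comp_continuousOn hσc
  -- Part 2: the construction
  have main : (∀ t ∈ Icc 0 T, (S t).det ≠ 0) →
      IsRiccatiSol T σ (fun t => S' t * (S t)⁻¹ - σ t) := by
    intro hdet
    set U : ℝ → Matrix (Fin d) (Fin d) ℝ := fun t => (S t)⁻¹ with hUdef
    have hSU : ∀ t ∈ Icc 0 T, S t * U t = 1 := fun t ht =>
      Matrix.mul_nonsing_inv _ (isUnit_iff_ne_zero.mpr (hdet t ht))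
    have hUd : ∀ t ∈ Icc 0 T, HasDerivWithinAt U (-(U t * S' t * U t)) (Icc 0 T) t := by
      intro t ht
      have hu : IsUnit (S t) :=
        (Matrix.isUnit_iff_isUnit_det _).mpr (isUnit_iff_ne_zero.mpr (hdet t ht))
      have h1 : HasFDerivAt Ring.inverse
          (-ContinuousLinearMap.mulLeftRight ℝ _ (U t) (U t)) (S t) := by
        have := hasFDerivAt_ringInverse (𝕜 := ℝ) hu.unit
        rwa [Matrix.coe_units_inv, hu.unit_spec] at this
      have h2 := h1.comp_hasDerivWithinAt t (hSd t ht)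
      have h3 : (Ring.inverse ∘ S) = U := by
        funext s
        simp [hUdef, Matrix.nonsing_inv_eq_ringInverse, Function.comp]
      rw [h3] at h2
      refine h2.congr_deriv ?_
      simp [ContinuousLinearMap.mulLeftRight_apply]
    have hUc : ContinuousOn U (Icc 0 T) := fun x hx => (hUd x hx).continuousWithinAt
    refine ⟨fun t => ((σ t - (σ t)ᵀ) * S' t + σ' t * S t) * U t
      + S' t * -(U t * S' t * U t) - σ' t, ?_, ?_, ?_, ?_⟩
    · exact ((((hσc.sub hσTc).mul hS'c).add (hσ'.mul hSc)).mul hUc |>.add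
        (hS'c.mul ((hUc.mul hS'c).mul hUc).neg)).sub hσ'
    · intro t ht
      exact ((hS'd t ht).mul (hUd t ht)).sub (hσd t ht)
    · intro t ht
      have h1 : S t * U t = 1 := hSU t ht
      have h2 : σ' t * S t * U t = σ' t := by
        rw [Matrix.mul_assoc, h1, Matrix.mul_one]
      show ((σ t - (σ t)ᵀ) * S' t + σ' t * S t) * U t + S' t * -(U t * S' t * U t) - σ' t
        = -((S' t * U t - σ t) * (S' t * U t - σ t)) - (σ t)ᵀ * (S' t * U t - σ t)
          - (S' t * U t - σ t) * σ t - (σ t)ᵀ * σ t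
      rw [Matrix.add_mul, h2]
      noncomm_ring
    · show S' T * (S T)⁻¹ - σ T = 0
      rw [hS'T, hST, inv_one, Matrix.mul_one, sub_self]
  refine ⟨⟨?_, fun h => ⟨_, main h⟩⟩, main⟩
  rintro ⟨R, R', hR'c, hRd, hReq, hRT⟩
  have hRc : ContinuousOn R (Icc 0 T) := fun x hx => (hRd x hx).continuousWithinAt
  set A : ℝ → Matrix (Fin d) (Fin d) ℝ := fun t => -((σ t)ᵀ + R t) with hAdef
  set E : ℝ → Matrix (Fin d) (Fin d) ℝ := fun t => S' t - (R t + σ t) * S t with hEdef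
  have hAc : ContinuousOn A (Icc 0 T) := (hσTc.add hRc).neg
  obtain ⟨K, hK⟩ := (isCompact_Icc).exists_bound_of_continuousOn hAc
  have hEd : ∀ t ∈ Icc 0 T, HasDerivWithinAt E (A t * E t) (Icc 0 T) t := by
    intro t ht
    have h := (hS'd t ht).sub (((hRd t ht).add (hσd t ht)).mul (hSd t ht))
    refine h.congr_deriv ?_
    simp only [hAdef, hEdef, Pi.add_apply]
    rw [hReq t ht]
    noncomm_ring
  have hET : E T = 0 := by
    simp [hEdef, hRT, hST, hS'T]
  have hEbound : ∀ t ∈ Icc 0 T, ‖A t * E t‖ ≤ K * ‖E t‖ := fun t ht =>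
    (norm_mul_le _ _).trans (mul_le_mul_of_nonneg_right (hK t ht) (norm_nonneg _))
  have hE0 : ∀ t ∈ Icc 0 T, E t = 0 := gronwall_zero_bwd hEd hEbound hET
  intro t0 ht0
  by_contra hdet0
  obtain ⟨v, hv0, hv⟩ := (Matrix.exists_mulVec_eq_zero_iff).mpr hdet0
  set N : Matrix (Fin d) (Fin d) ℝ := Matrix.vecMulVec v v with hNdef
  set X : ℝ → Matrix (Fin d) (Fin d) ℝ := fun t => S t * N with hXdef
  have hsub : Icc t0 T ⊆ Icc 0 T := Icc_subset_Icc ht0.1 (le_refl T)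
  obtain ⟨K2, hK2⟩ := (isCompact_Icc (a := (0:ℝ)) (b := T)).exists_bound_of_continuousOn
    (hRc.add hσc)
  have hXd : ∀ t ∈ Icc t0 T, HasDerivWithinAt X ((R t + σ t) * X t) (Icc t0 T) t := by
    intro t ht
    have h := ((hSd t (hsub ht)).mono hsub).mul_const N
    refine h.congr_deriv ?_
    have hS'eq : S' t = (R t + σ t) * S t := by
      have := hE0 t (hsub ht)
      simpa [hEdef, sub_eq_zero] using this
    rw [hXdef, hS'eq, Matrix.mul_assoc]
  have hXbound : ∀ t ∈ Icc t0 T, ‖(R t + σ t) * X t‖ ≤ K2 * ‖X t‖ := fun t ht =>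
    (norm_mul_le _ _).trans (mul_le_mul_of_nonneg_right (hK2 t (hsub ht)) (norm_nonneg _))
  have hXt0 : X t0 = 0 := by
    ext i j
    have h1 : (S t0 * N) i j = (S t0 *ᵥ v) i * v j := by
      simp [hNdef, Matrix.mul_apply, Matrix.vecMulVec_apply, Matrix.mulVec, dotProduct,
        Finset.sum_mul, mul_assoc]
    simp only [hXdef]
    rw [h1, hv]
    simp
  have hX0 := gronwall_zero_fwd hXd hXbound hXt0 T ⟨ht0.2, le_refl T⟩
  have hNT : X T = N := by simp [hXdef, hST]
  rw [hNT] at hX0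
  obtain ⟨k, hk⟩ := Function.ne_iff.mp hv0
  have : v k * v k = 0 := by
    have := congrFun (congrFun hX0 k) k
    simpa [hNdef, Matrix.vecMulVec_apply] using this
  exact hk (mul_self_eq_zero.mp this)
end

section
/- Let n ≥ 1, let p₁, …, pₙ ∈ ℝ, let D = diag(p₁, …, pₙ) ∈ ℝ^{n×n}, let c ∈ ℝⁿ, and set E = D² + c cᵀ. Let φ : [0, ∞) → ℝ^{n×n} be twice continuously differentiable with φ″(y) = E φ(y) for all y ≥ 0, φ(0) = Iₙ, and φ′(0) = −D. Then det φ(y) ≠ 0 for every y ∈ [0, ∞). -/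
open Matrix Set
open scoped RealInnerProductSpace

attribute [local instance] Matrix.frobeniusSeminormedAddCommGroup
  Matrix.frobeniusNormedAddCommGroup Matrix.frobeniusNormedSpace

/-- Let `D = diag(p₁, …, pₙ)`, `c ∈ ℝⁿ`, `E = D² + c cᵀ`, and let
`φ : [0,∞) → ℝ^{n×n}` be twice continuously differentiable with `φ″ = E φ`, `φ(0) = I`,
`φ′(0) = −D`.  Then `det φ(y) ≠ 0` for every `y ≥ 0`. -/
theorem stmt17 (n : ℕ) (hn : 1 ≤ n) (p c : Fin n → ℝ)
    (D E : Matrix (Fin n) (Fin n) ℝ)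
    (hD : D = Matrix.diagonal p)
    (hE : E = D * D + Matrix.of fun i j => c i * c j)
    (φ φ' : ℝ → Matrix (Fin n) (Fin n) ℝ)
    (hφ : ∀ y ∈ Ici (0 : ℝ), HasDerivWithinAt φ (φ' y) (Ici 0) y)
    (hφ' : ∀ y ∈ Ici (0 : ℝ), HasDerivWithinAt φ' (E * φ y) (Ici 0) y)
    (hφ0 : φ 0 = 1) (hφ'0 : φ' 0 = -D) :
    ∀ y ∈ Ici (0 : ℝ), (φ y).det ≠ 0 := by
  -- symmetry of E
  have hEsym : ∀ i j, E i j = E j i := by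
    intro i j
    subst hE hD
    rcases eq_or_ne i j with h | h
    · subst h; rfl
    · simp [Matrix.diagonal_apply, h, Ne.symm h, mul_comm]
  intro y₀ hy₀ hdet
  have hy₀' : (0:ℝ) ≤ y₀ := hy₀
  rcases eq_or_lt_of_le hy₀' with rfl | hpos
  · rw [hφ0] at hdet; simp at hdet
  obtain ⟨v, hv0, hv⟩ := (Matrix.exists_mulVec_eq_zero_iff).mpr hdet
  -- continuous linear maps
  set Ev : EuclideanSpace ℝ (Fin n) →L[ℝ] EuclideanSpace ℝ (Fin n) :=
    LinearMap.toContinuousLinearMap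
      { toFun := fun x => WithLp.toLp 2 (E.mulVec x)
        map_add' := fun x y => by simp [Matrix.mulVec_add]
        map_smul' := fun a x => by simp [Matrix.mulVec_smul] } with hEv
  set Lv : Matrix (Fin n) (Fin n) ℝ →L[ℝ] EuclideanSpace ℝ (Fin n) :=
    LinearMap.toContinuousLinearMap
      { toFun := fun M => WithLp.toLp 2 (M.mulVec v)
        map_add' := fun M N => by simp [Matrix.add_mulVec]
        map_smul' := fun a M => by simp [Matrix.smul_mulVec] } with hLv
  have hEvapp : ∀ x : EuclideanSpace ℝ (Fin n), Ev x = WithLp.toLp 2 (E.mulVec x) := fun _ => rfl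
  have hLvapp : ∀ M : Matrix (Fin n) (Fin n) ℝ, Lv M = WithLp.toLp 2 (M.mulVec v) := fun _ => rfl
  -- the curves
  set u : ℝ → EuclideanSpace ℝ (Fin n) := fun y => WithLp.toLp 2 ((φ y).mulVec v)
    with hu_def
  set u' : ℝ → EuclideanSpace ℝ (Fin n) := fun y => WithLp.toLp 2 ((φ' y).mulVec v)
    with hu'_def
  have hu : ∀ y ∈ Ici (0:ℝ), HasDerivWithinAt u (u' y) (Ici 0) y := fun y hy =>
    Lv.hasFDerivAt.comp_hasDerivWithinAt y (hφ y hy)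
  have hu' : ∀ y ∈ Ici (0:ℝ), HasDerivWithinAt u' (Ev (u y)) (Ici 0) y := fun y hy => by
    have h := Lv.hasFDerivAt.comp_hasDerivWithinAt y (hφ' y hy)
    have he : Lv (E * φ y) = Ev (u y) := by
      rw [hLvapp, hEvapp, ← Matrix.mulVec_mulVec]
    exact h.congr_deriv he
  -- self-adjointness of Ev
  have hsa : ∀ x y : EuclideanSpace ℝ (Fin n), ⟪Ev x, y⟫ = ⟪x, Ev y⟫ := by
    intro x y
    simp only [hEvapp, PiLp.inner_apply, PiLp.toLp_apply, RCLike.inner_apply, conj_trivial, Matrix.mulVec,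
      dotProduct, Finset.sum_mul, Finset.mul_sum]
    rw [Finset.sum_comm]
    refine Finset.sum_congr rfl fun i _ => Finset.sum_congr rfl fun j _ => ?_
    rw [hEsym i j]; ring
  -- energy function
  set F : ℝ → ℝ := fun y => ⟪u' y, u' y⟫ - ⟪Ev (u y), u y⟫ with hF_def
  have hF : ∀ y ∈ Ici (0:ℝ), HasDerivWithinAt F 0 (Ici 0) y := by
    intro y hy
    have h1 := (hu' y hy).inner ℝ (hu' y hy)
    have h2 := ((Ev.hasFDerivAt.comp_hasDerivWithinAt y (hu y hy)).inner ℝ (hu y hy))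
    have h3 := h1.sub h2
    have h4 : ⟪u' y, Ev (u y)⟫ + ⟪Ev (u y), u' y⟫ - (⟪(⇑Ev ∘ u) y, u' y⟫ + ⟪Ev (u' y), u y⟫) = 0 := by
      simp only [Function.comp_apply]
      rw [hsa (u' y) (u y), real_inner_comm (Ev (u y)) (u' y)]
      ring
    exact (h3.congr_deriv h4 :)
  have hFcont : ContinuousOn F (Icc 0 y₀) := fun x hx =>
    ((hF x hx.1).continuousWithinAt).mono Icc_subset_Ici_self
  have hFconst := constant_of_has_deriv_right_zero hFcont (fun x hx =>
    (hF x hx.1).mono (Ici_subset_Ici.mpr hx.1))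
  have hFy₀ : F y₀ = F 0 := hFconst y₀ (right_mem_Icc.mpr hy₀')
  have huy₀ : u y₀ = 0 := by
    show WithLp.toLp 2 ((φ y₀).mulVec v) = 0
    rw [hv]; rfl
  -- value at 0
  have hF0 : F 0 ≤ 0 := by
    have key : F 0 = -(∑ i, c i * v i)^2 := by
      simp only [hF_def, hu_def, hu'_def, hφ0, hφ'0, hE, hD, hEvapp, Matrix.one_mulVec]
      simp only [PiLp.inner_apply, PiLp.toLp_apply, WithLp.ofLp_toLp, RCLike.inner_apply, conj_trivial, Matrix.mulVec,
        dotProduct, Matrix.neg_apply, Matrix.add_apply, Matrix.diagonal_mul_diagonal,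
        Matrix.diagonal_apply, Matrix.of_apply, neg_mul, Finset.sum_neg_distrib,
        ite_mul, zero_mul, Finset.sum_ite_eq, Finset.mem_univ, if_true, add_mul,
        Finset.sum_add_distrib, neg_neg, mul_neg]
      rw [sq, Finset.sum_mul_sum]
      rw [Finset.sum_comm]
      ring_nf
      have hA : ∑ x, p x ^ 2 * v x ^ 2 = ∑ x, p x * p x * v x * v x :=
        Finset.sum_congr rfl fun x _ => by ring
      have hB : ∑ x, (∑ y, c x * c y * v y) * v x = ∑ x, ∑ y, c y * v y * c x * v x := by
        refine Finset.sum_congr rfl fun x _ => ?_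
        rw [Finset.sum_mul]
        exact Finset.sum_congr rfl fun y _ => by ring
      have hC : ∑ x, (v x * ∑ y, c x * c y * v y + v x ^ 2 * p x ^ 2) =
          ∑ x, ∑ y, c y * v y * c x * v x + ∑ x, p x * p x * v x * v x := by
        rw [← Finset.sum_add_distrib]
        refine Finset.sum_congr rfl fun x _ => ?_
        rw [Finset.mul_sum]
        congr 1
        · exact Finset.sum_congr rfl fun y _ => by ring
        · ring
      rw [hC]
      ring
      rw [Finset.sum_comm]
    rw [key]
    exact neg_nonpos_of_nonneg (sq_nonneg _)
  have hu'y₀ : u' y₀ = 0 := by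
    have h1 : F y₀ = ⟪u' y₀, u' y₀⟫ := by
      simp [hF_def, huy₀]
    have h2 : (0:ℝ) ≤ ⟪u' y₀, u' y₀⟫ := real_inner_self_nonneg
    have h3 : ⟪u' y₀, u' y₀⟫ = 0 := le_antisymm (by rw [← h1, hFy₀]; exact hF0) h2
    exact inner_self_eq_zero.mp h3
  -- ODE uniqueness backwards
  set W : (EuclideanSpace ℝ (Fin n) × EuclideanSpace ℝ (Fin n)) →L[ℝ] (EuclideanSpace ℝ (Fin n) × EuclideanSpace ℝ (Fin n)) :=
    (ContinuousLinearMap.snd ℝ (EuclideanSpace ℝ (Fin n)) (EuclideanSpace ℝ (Fin n))).prod (Ev.comp (ContinuousLinearMap.fst ℝ (EuclideanSpace ℝ (Fin n)) (EuclideanSpace ℝ (Fin n)))) with hW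
  set Z : ℝ → EuclideanSpace ℝ (Fin n) × EuclideanSpace ℝ (Fin n) := fun y => (u y, u' y) with hZ
  have hZcont : ContinuousOn Z (Icc 0 y₀) := fun x hx =>
    (((hu x hx.1).continuousWithinAt).prodMk ((hu' x hx.1).continuousWithinAt)).mono
      Icc_subset_Ici_self
  have hZderiv : ∀ t ∈ Ioc (0:ℝ) y₀, HasDerivWithinAt Z (W (Z t)) (Iic t) t := by
    intro t ht
    have hmem : Ici (0:ℝ) ∈ nhdsWithin t (Iic t) :=
      mem_nhdsWithin_of_mem_nhds (Ici_mem_nhds ht.1)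
    have h1 := ((hu t (le_of_lt ht.1)).prodMk (hu' t (le_of_lt ht.1))).mono_of_mem_nhdsWithin hmem
    have he : W (Z t) = (u' t, Ev (u t)) := rfl
    rw [he]
    exact h1
  have h0cont : ContinuousOn (fun _ : ℝ => (0:EuclideanSpace ℝ (Fin n) × EuclideanSpace ℝ (Fin n))) (Icc 0 y₀) := continuousOn_const
  have h0deriv : ∀ t ∈ Ioc (0:ℝ) y₀,
      HasDerivWithinAt (fun _ : ℝ => (0:EuclideanSpace ℝ (Fin n) × EuclideanSpace ℝ (Fin n))) (W 0) (Iic t) t := by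
    intro t ht
    rw [map_zero]
    exact hasDerivWithinAt_const t _ 0
  have huniq := ODE_solution_unique_of_mem_Icc_left (K := ‖W‖₊)
    (v := fun _ q => W q) (s := fun _ => univ)
    (fun _ _ => W.lipschitz.lipschitzOnWith)
    hZcont hZderiv (fun _ _ => mem_univ _)
    h0cont (fun t ht => h0deriv t ht) (fun _ _ => mem_univ _)
    (by show (u y₀, u' y₀) = (0, 0); rw [huy₀, hu'y₀])
  have hZ0 := huniq (left_mem_Icc.mpr hy₀')
  have : u 0 = 0 := congrArg Prod.fst hZ0
  have h5 : (φ 0).mulVec v = 0 := congrArg WithLp.ofLp this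
  rw [hφ0, Matrix.one_mulVec] at h5
  exact hv0 h5
end
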